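/- arXiv:math/0303245 — 3 statements merged into one kernel-verified Lean document; each statement's English description precedes it below -/
import Mathlib

section
/- Let w ∈ S_n(a) with w ≠ identity, let p ≤ k be maximal such that w(a_p + 1) ≠ a_p + 1, and define u(i) = w(i) if i ≤ a_p and w(i) < w(a_p+1); u(i) = w(i) - 1 if i ≤ a_p and w(i) > w(a_p+1); u(i) = w(i+1) - 1 if i > a_p. Then u is a well-defined permutation in S_n(a), and setting α = s_{w(a_p+1)} s_{w(a_p+1)+1} ⋯ s_{a_p}, one has u →_α w. -/
/-- Number of inversions of `u` among positions `1,…,n` (the Coxeter length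
when `u` fixes everything outside `{1,…,n}`). -/
def invLen (n : ℕ) (u : Equiv.Perm ℕ) : ℕ :=
  (((Finset.Icc 1 n) ×ˢ (Finset.Icc 1 n)).filter
    (fun p => p.1 < p.2 ∧ u p.2 < u p.1)).card

/-- The partial products `u · t_{b₁c₁} ⋯ t_{bᵢcᵢ}` (indices of `b`, `c` start at 1). -/
def partialProd (u : Equiv.Perm ℕ) (b c : ℕ → ℕ) : ℕ → Equiv.Perm ℕ
  | 0 => u
  | (i + 1) => partialProd u b c i * Equiv.swap (b (i + 1)) (c (i + 1))

/-- The sequences `b, c` witness `u →_α w` in `S_n`, where `α = s_r ⋯ s_m` has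
length `l = m - r + 1`:  (1) `bᵢ ≤ m < cᵢ` (within `{1,…,n}`);
(2) `w = u t_{b₁c₁} ⋯ t_{b_l c_l}`; (3) each partial product increases the length
by exactly one; (4) the `bᵢ` are distinct. -/
def ArrowWitness (n m l : ℕ) (u w : Equiv.Perm ℕ) (b c : ℕ → ℕ) : Prop :=
  (∀ i, 1 ≤ i → i ≤ l → 1 ≤ b i ∧ b i ≤ m ∧ m < c i ∧ c i ≤ n) ∧
  w = partialProd u b c l ∧
  (∀ i, 1 ≤ i → i ≤ l → invLen n (partialProd u b c i) = invLen n u + i) ∧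
  (∀ i j, 1 ≤ i → i < j → j ≤ l → b i ≠ b j)

/-- The Pieri relation `u →_α w` for `α = s_r s_{r+1} ⋯ s_m`. -/
def PieriArrow (n r m : ℕ) (u w : Equiv.Perm ℕ) : Prop :=
  ∃ b c : ℕ → ℕ, ArrowWitness n m (m - r + 1) u w b c


lemma chain_aux (g : ℕ → ℕ) (s e : ℕ) (h : ∀ z, s ≤ z → z < e → g z < g (z+1)) :
    ∀ x d, s ≤ x → x + d ≤ e → g x + d ≤ g (x + d) := by
  intro x d
  induction d with
  | zero => intro _ _; simp
  | succ d ih =>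
    intro hx hxd
    have h1 := ih hx (by omega)
    have h2 := h (x + d) (by omega) (by omega)
    have : x + (d+1) = (x + d) + 1 := by omega
    rw [this]; omega

lemma sorted_getD_lt {L : List ℕ} (h : List.Pairwise (· < ·) L) {s t : ℕ}
    (hst : s < t) (ht : t < L.length) : L.getD s 0 < L.getD t 0 := by
  rw [List.getD_eq_getElem L 0 (by omega), List.getD_eq_getElem L 0 ht]
  exact List.Pairwise.rel_get_of_lt h (by exact hst)

lemma sorted_getD_mem {L : List ℕ} {s : ℕ} (h : s < L.length) : L.getD s 0 ∈ L := by
  rw [List.getD_eq_getElem L 0 h]; exact List.getElem_mem _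

lemma mem_sorted_index {L : List ℕ} {v : ℕ} (hv : v ∈ L) :
    ∃ s, s < L.length ∧ L.getD s 0 = v := by
  obtain ⟨⟨s, hs⟩, rfl⟩ := List.mem_iff_get.mp hv
  exact ⟨s, hs, by rw [List.getD_eq_getElem L 0 hs]; rfl⟩


lemma partialProd_succ (u : Equiv.Perm ℕ) (b c : ℕ → ℕ) (i : ℕ) :
    partialProd u b c (i+1) = partialProd u b c i * Equiv.swap (b (i+1)) (c (i+1)) := rfl

lemma invLen_swap (n : ℕ) (v : Equiv.Perm ℕ) (b c : ℕ) (hb : 1 ≤ b) (hbc : b < c)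
    (hc : c ≤ n) (hv : v c = v b + 1) :
    invLen n (v * Equiv.swap b c) = invLen n v + 1 := by
  have hne : ∀ s t : ℕ, s ≠ t → v s ≠ v t := fun s t h hv' => h (v.injective hv')
  have main : ∀ x y : ℕ, x < y →
      ((v (Equiv.swap b c y) < v (Equiv.swap b c x)) ↔ (v y < v x ∨ (x = b ∧ y = c))) := by
    intro x y hxy
    rcases eq_or_ne x b with hxb|hxb <;> rcases eq_or_ne y c with hyc|hyc
    · rw [hxb, hyc, Equiv.swap_apply_left, Equiv.swap_apply_right]
      omega
    · have hyb : y ≠ b := by omega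
      rw [hxb, Equiv.swap_apply_left, Equiv.swap_apply_of_ne_of_ne hyb hyc]
      have h1 := hne y b hyb; have h2 := hne y c hyc
      omega
    · have hxc : x ≠ c := by omega
      rw [hyc, Equiv.swap_apply_right, Equiv.swap_apply_of_ne_of_ne hxb hxc]
      have h1 := hne x b hxb; have h2 := hne x c hxc
      omega
    · rcases eq_or_ne x c with hxc|hxc
      · have hyb : y ≠ b := by omega
        rw [hxc, Equiv.swap_apply_right, Equiv.swap_apply_of_ne_of_ne hyb hyc]
        have h1 := hne y b hyb; have h2 := hne y c hyc
        have hcb : c ≠ b := by omega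
        omega
      · rcases eq_or_ne y b with hyb|hyb
        · rw [hyb, Equiv.swap_apply_left, Equiv.swap_apply_of_ne_of_ne hxb hxc]
          have h1 := hne x b hxb; have h2 := hne x c hxc
          have hbc2 : b ≠ c := by omega
          omega
        · rw [Equiv.swap_apply_of_ne_of_ne hxb hxc, Equiv.swap_apply_of_ne_of_ne hyb hyc]
          omega
  have key : (((Finset.Icc 1 n) ×ˢ (Finset.Icc 1 n)).filter
      (fun p => p.1 < p.2 ∧ (v * Equiv.swap b c) p.2 < (v * Equiv.swap b c) p.1))
      = insert (b, c) (((Finset.Icc 1 n) ×ˢ (Finset.Icc 1 n)).filter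
      (fun p => p.1 < p.2 ∧ v p.2 < v p.1)) := by
    ext ⟨x, y⟩
    rw [Finset.mem_filter, Finset.mem_insert, Finset.mem_filter]
    simp only [Finset.mem_filter, Finset.mem_insert, Finset.mem_product, Finset.mem_Icc,
      Equiv.Perm.mul_apply, Prod.mk.injEq]
    constructor
    · rintro ⟨hmem, hxy, hlt⟩
      rcases (main x y hxy).mp hlt with h|h
      · exact Or.inr ⟨hmem, hxy, h⟩
      · exact Or.inl h
    · rintro (⟨heq1, heq2⟩|⟨hmem, hxy, hlt⟩)
      · rw [heq1, heq2]
        exact ⟨⟨⟨hb, by omega⟩, ⟨by omega, hc⟩⟩, hbc, (main b c hbc).mpr (Or.inr ⟨rfl, rfl⟩)⟩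
      · exact ⟨hmem, hxy, (main x y hxy).mpr (Or.inl hlt)⟩
  rw [invLen, invLen, key, Finset.card_insert_of_notMem]
  intro hmemf
  simp only [Finset.mem_filter] at hmemf
  omega

theorem recursion_step_exists (n k : ℕ) (a : ℕ → ℕ)
    (hk : 1 ≤ k) (ha0 : a 0 = 0) (hak : a (k + 1) = n)
    (hamono : ∀ i, i ≤ k → a i < a (i + 1))
    (w : Equiv.Perm ℕ) (hwfix : ∀ i, ¬(1 ≤ i ∧ i ≤ n) → w i = i)
    -- `w ∈ S_n(a)`: descents of `w` only at positions `a 1, …, a k`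
    (hwdesc : ∀ q, 1 ≤ q → q < n → w (q + 1) < w q → ∃ i, 1 ≤ i ∧ i ≤ k ∧ q = a i)
    (hwne : w ≠ 1)
    -- `p ≤ k` is maximal such that `w (a p + 1) ≠ a p + 1`
    (p : ℕ) (hp1 : 1 ≤ p) (hpk : p ≤ k)
    (hpne : w (a p + 1) ≠ a p + 1)
    (hpmax : ∀ q, p < q → q ≤ k → w (a q + 1) = a q + 1) :
    ∃ u : Equiv.Perm ℕ,
      (∀ i, u i = if i ≤ a p then (if w i < w (a p + 1) then w i else w i - 1)
        else w (i + 1) - 1) ∧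
      (∀ i, ¬(1 ≤ i ∧ i ≤ n) → u i = i) ∧
      (∀ q, 1 ≤ q → q < n → u (q + 1) < u q → ∃ i, 1 ≤ i ∧ i ≤ k ∧ q = a i) ∧
      PieriArrow n (w (a p + 1)) (a p) u w := by
  classical
  set M := a p with hMdef
  set r := w (M + 1) with hrdef
  -- monotonicity of a
  have hamono' : ∀ i j : ℕ, i < j → j ≤ k + 1 → a i < a j := by
    intro i j hij hj
    induction j with
    | zero => omega
    | succ j ih =>
      have h1 : a j < a (j+1) := hamono j (by omega)
      rcases Nat.lt_or_ge i j with h|h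
      · exact lt_trans (ih h (by omega)) h1
      · have hij2 : i = j := by omega
        rw [hij2]; exact h1
  have hale : ∀ i, i ≤ k + 1 → a i ≤ n := by
    intro i hi
    rcases eq_or_lt_of_le hi with heq|hlt
    · rw [heq, hak]
    · have := hamono' i (k+1) hlt le_rfl
      omega
  have hM1 : 1 ≤ M := by
    have := hamono' 0 p (by omega) (by omega)
    omega
  have hMn : M + 1 ≤ n := by
    have := hamono' p (k+1) (by omega) le_rfl
    rw [hak] at this
    omega
  have hMp1 : M < a (p+1) := hamono p hpk
  have hap1n : a (p+1) ≤ n := hale (p+1) (by omega)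
  -- w maps [1,n] into [1,n]
  have hwmem : ∀ x, 1 ≤ x → x ≤ n → 1 ≤ w x ∧ w x ≤ n := by
    intro x hx1 hxn
    constructor
    · by_contra h
      have h0 : w x = 0 := by omega
      have h1 : w 0 = 0 := hwfix 0 (by omega)
      have := w.injective (h0.trans h1.symm)
      omega
    · by_contra h
      have hfix : w (w x) = w x := hwfix (w x) (by omega)
      have := w.injective hfix
      omega
  have hwsymmem : ∀ v, 1 ≤ v → v ≤ n → 1 ≤ w.symm v ∧ w.symm v ≤ n := by
    intro v hv1 hvn
    by_contra hcon
    have h1 : ¬ (1 ≤ w.symm v ∧ w.symm v ≤ n) := by tauto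
    have h2 := hwfix _ h1
    rw [w.apply_symm_apply] at h2
    rw [← h2] at h1
    exact h1 ⟨hv1, hvn⟩
  -- fixed points above a (p+1)
  have hfixaux : ∀ t, t ≤ k - p → ∀ x, a (k + 1 - t) < x → w x = x := by
    intro t
    induction t with
    | zero =>
      intro _ x hx
      simp only [Nat.sub_zero] at hx
      rw [hak] at hx
      exact hwfix x (by omega)
    | succ t ih =>
      intro ht x hx
      have hq : k + 1 - (t+1) = k - t := by omega
      rw [hq] at hx
      have hqp : p + 1 ≤ k - t := by omega
      have hqk : k - t ≤ k := by omega
      have hq1n : a (k - t + 1) ≤ n := hale _ (by omega)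
      by_cases hx2 : a (k - t + 1) < x
      · exact ih (by omega) x (by rwa [show k + 1 - t = k - t + 1 by omega])
      push_neg at hx2
      have hbinc : ∀ z, a (k - t) + 1 ≤ z → z < a (k - t + 1) → w z < w (z + 1) := by
        intro z hz1 hz2
        by_contra hcon
        push_neg at hcon
        have hne : w (z+1) ≠ w z := fun h => by have := w.injective h; omega
        have hdesc : w (z+1) < w z := by omega
        obtain ⟨i', hi1, hi2, hi3⟩ := hwdesc z (by omega) (by omega) hdesc
        have hgt : k - t < i' := by
          by_contra hle
          push_neg at hle
          have : a i' ≤ a (k - t) := by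
            rcases Nat.lt_or_ge i' (k - t) with h|h
            · exact le_of_lt (hamono' i' (k - t) h (by omega))
            · have : i' = k - t := by omega
              rw [this]
          omega
        have hlt2 : a (k - t + 1) ≤ a i' := by
          rcases Nat.lt_or_ge (k - t + 1) i' with h|h
          · exact le_of_lt (hamono' (k - t + 1) i' h (by omega))
          · have : i' = k - t + 1 := by omega
            rw [this]
        omega
      have hstart : w (a (k - t) + 1) = a (k - t) + 1 := hpmax (k - t) (by omega) (by omega)
      have hupper : ∀ z, z ≤ a (k - t + 1) → 1 ≤ z → w z ≤ a (k - t + 1) := by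
        intro z hz hz1
        by_contra hcon
        push_neg at hcon
        have hwzn : w z ≤ n := (hwmem z hz1 (by omega)).2
        have h3 : w (w z) = w z := ih (by omega) (w z)
          (by rw [show k + 1 - t = k - t + 1 by omega]; omega)
        have h4 : w z = z := w.injective h3
        omega
      have hxe : a (k - t) + 1 ≤ x := by omega
      have h1 : x ≤ w x := by
        have hch := chain_aux w (a (k-t)+1) (a (k-t+1)) hbinc (a (k-t)+1) (x - (a (k-t)+1))
          le_rfl (by omega)
        rw [hstart] at hch
        rw [show a (k-t)+1 + (x - (a (k-t)+1)) = x from by omega] at hch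
        omega
      have h2 : w x ≤ x := by
        have hch := chain_aux w (a (k-t)+1) (a (k-t+1)) hbinc x (a (k-t+1) - x) (by omega) (by omega)
        rw [show x + (a (k-t+1) - x) = a (k-t+1) from by omega] at hch
        have := hupper (a (k-t+1)) le_rfl (by omega)
        omega
      omega
  have hfixa : ∀ x, a (p + 1) < x → w x = x := by
    have := hfixaux (k - p) le_rfl
    rwa [show k + 1 - (k - p) = p + 1 from by omega] at this
  have hLEa : ∀ x, x ≤ a (p+1) → w x ≤ a (p+1) := by
    intro x hx
    rcases Nat.eq_zero_or_pos x with hx0|hx1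
    · have h0 : w 0 = 0 := hwfix 0 (by omega)
      rw [hx0, h0]; omega
    by_contra hcon
    push_neg at hcon
    have hwn : w x ≤ n := (hwmem x hx1 (by omega)).2
    have h3 := hfixa (w x) hcon
    have h4 := w.injective h3
    omega
  have hinc : ∀ x, M + 1 ≤ x → w x < w (x + 1) := by
    intro x hxM
    rcases Nat.lt_or_ge x (a (p+1)) with hx|hx
    · by_contra hcon
      push_neg at hcon
      have hne : w (x+1) ≠ w x := fun h => by have := w.injective h; omega
      have hdesc : w (x+1) < w x := by omega
      obtain ⟨i', hi1, hi2, hi3⟩ := hwdesc x (by omega) (by omega) hdesc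
      have hgt : p < i' := by
        by_contra hle
        push_neg at hle
        have : a i' ≤ a p := by
          rcases Nat.lt_or_ge i' p with h|h
          · exact le_of_lt (hamono' i' p h (by omega))
          · have : i' = p := by omega
            rw [this]
        omega
      have hlt2 : a (p+1) ≤ a i' := by
        rcases Nat.lt_or_ge (p+1) i' with h|h
        · exact le_of_lt (hamono' (p+1) i' h (by omega))
        · have : i' = p+1 := by omega
          rw [this]
      omega
    · rcases eq_or_lt_of_le hx with heq|hlt
      · have h1 := hLEa x (by omega)
        have h2 := hfixa (x+1) (by omega)
        omega
      · have h1 := hfixa x hlt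
        have h2 := hfixa (x+1) (by omega)
        omega
  have hmono : ∀ x y, M + 1 ≤ x → x ≤ y → w x ≤ w y := by
    intro x y hx hxy
    have := chain_aux w (M+1) y (fun z hz _ => hinc z hz) x (y - x) hx (by omega)
    rw [show x + (y - x) = y from by omega] at this
    omega
  have hrn : 1 ≤ r ∧ r ≤ n := hwmem (M+1) (by omega) hMn
  have hrM : r ≤ M := by
    have h2 := chain_aux w (M+1) (a (p+1)) (fun z hz _ => hinc z hz) (M+1)
      (a (p+1) - (M+1)) le_rfl (by omega)
    rw [show M+1 + (a (p+1) - (M+1)) = a (p+1) from by omega] at h2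
    have h3 := hLEa (a (p+1)) le_rfl
    have h4 : r ≠ M + 1 := hpne
    rw [← hrdef] at h2
    omega
  -- ########## STAGE 2 ##########
  set l := M - r + 1 with hldef
  set J : Finset ℕ := ((Finset.Icc 1 M).image w).filter (fun v => r < v) with hJdef
  have hJmem : ∀ v, v ∈ J ↔ r < v ∧ ∃ x, 1 ≤ x ∧ x ≤ M ∧ w x = v := by
    intro v
    rw [hJdef]
    simp only [Finset.mem_filter, Finset.mem_image, Finset.mem_Icc]
    constructor
    · rintro ⟨⟨x, ⟨h1, h2⟩, h3⟩, h4⟩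
      exact ⟨h4, x, h1, h2, h3⟩
    · rintro ⟨h4, x, h1, h2, h3⟩
      exact ⟨⟨x, ⟨h1, h2⟩, h3⟩, h4⟩
  have hposJ : ∀ x, 1 ≤ x → x ≤ M → w x < r ∨ w x ∈ J := by
    intro x h1 h2
    rcases Nat.lt_or_ge (w x) r with h|h
    · exact Or.inl h
    · right
      rw [hJmem]
      have hne : w x ≠ r := fun he => by
        have := w.injective (he.trans hrdef)
        omega
      exact ⟨by omega, x, h1, h2, rfl⟩
  have hJval : ∀ v, v ∈ J → r < v ∧ v ≤ n ∧ 1 ≤ w.symm v ∧ w.symm v ≤ M := by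
    intro v hv
    obtain ⟨h1, x, hx1, hx2, hx3⟩ := (hJmem v).mp hv
    have hb := hwmem x hx1 (by omega)
    have hxv : w.symm v = x := by rw [← hx3, w.symm_apply_apply]
    exact ⟨h1, by omega, by omega, by omega⟩
  have hJcard : J.card = l := by
    have himg : ((Finset.Icc 1 M).image w).card = M := by
      rw [Finset.card_image_of_injective _ w.injective, Nat.card_Icc]
      omega
    have hneg : (((Finset.Icc 1 M).image w).filter (fun v => ¬ r < v)) = Finset.Icc 1 (r - 1) := by
      ext v
      simp only [Finset.mem_filter, Finset.mem_image, Finset.mem_Icc, not_lt]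
      constructor
      · rintro ⟨⟨x, ⟨hx1, hx2⟩, hx3⟩, hle⟩
        have h1 := (hwmem x hx1 (by omega)).1
        have hne : w x ≠ r := fun he => by
          have := w.injective (he.trans hrdef)
          omega
        omega
      · rintro ⟨hv1, hv2⟩
        refine ⟨⟨w.symm v, ⟨(hwsymmem v hv1 (by omega)).1, ?_⟩, w.apply_symm_apply v⟩, by omega⟩
        by_contra hcon
        push_neg at hcon
        have h5 := hmono (M+1) (w.symm v) le_rfl (by omega)
        rw [w.apply_symm_apply] at h5
        rw [← hrdef] at h5
        omega
    have hsum := Finset.card_filter_add_card_filter_not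
      (s := (Finset.Icc 1 M).image w) (p := fun v => r < v)
    rw [hneg] at hsum
    rw [Nat.card_Icc] at hsum
    rw [← hJdef] at hsum
    omega
  set L : List ℕ := J.sort (· ≤ ·) with hLdef
  have hLlen : L.length = l := by rw [hLdef, Finset.length_sort]; exact hJcard
  have hLsort : List.Pairwise (· < ·) L := J.sortedLT_sort.pairwise
  have hLmem : ∀ v, v ∈ L ↔ v ∈ J := fun v => J.mem_sort _
  have hl1 : 1 ≤ l := by omega
  set j : ℕ → ℕ := fun i => if i = 0 then n + 1 else L.getD (l - i) 0 with hjdef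
  have hj0 : j 0 = n + 1 := by simp [hjdef]
  have hjeq : ∀ i, 1 ≤ i → j i = L.getD (l - i) 0 := by
    intro i hi
    rw [hjdef]
    simp only [if_neg (show ¬ i = 0 by omega)]
  have hjJ : ∀ i, 1 ≤ i → i ≤ l → j i ∈ J := by
    intro i h1 h2
    rw [hjeq i h1, ← hLmem]
    exact sorted_getD_mem (by rw [hLlen]; omega)
  have hjdec : ∀ i, 1 ≤ i → i ≤ l → j i < j (i - 1) := by
    intro i h1 h2
    rcases eq_or_lt_of_le h1 with heq|hgt
    · rw [← heq]
      have := (hJval _ (hjJ 1 le_rfl (by omega))).2.1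
      simp only [Nat.sub_self]
      rw [hj0]
      omega
    · rw [hjeq i (by omega), hjeq (i-1) (by omega)]
      exact sorted_getD_lt hLsort (by omega) (by rw [hLlen]; omega)
  have hgap : ∀ i v, 1 ≤ i → i ≤ l → v ∈ J → j i < v → j (i-1) ≤ v := by
    intro i v h1 h2 hvJ hlt
    obtain ⟨s, hs, hsv⟩ := mem_sorted_index ((hLmem v).mpr hvJ)
    rw [hLlen] at hs
    have hji : j i = L.getD (l - i) 0 := hjeq i h1
    have hsgt : l - i < s := by
      by_contra hle
      push_neg at hle
      rcases eq_or_lt_of_le hle with heq|hlt2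
      · rw [heq] at hsv
        omega
      · have := sorted_getD_lt hLsort hlt2 (by rw [hLlen]; omega)
        omega
    rcases eq_or_lt_of_le h1 with heq|hgt
    · omega
    · have e2 : j (i-1) = L.getD (l - (i-1)) 0 := hjeq (i-1) (by omega)
      rcases eq_or_lt_of_le (show l - (i-1) ≤ s by omega) with heq2|hlt2
      · rw [e2, heq2, hsv]
      · have := sorted_getD_lt hLsort hlt2 (by rw [hLlen]; omega)
        omega
  have hminJ : ∀ v, v ∈ J → j l ≤ v := by
    intro v hv
    obtain ⟨s, hs, hsv⟩ := mem_sorted_index ((hLmem v).mpr hv)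
    rw [hLlen] at hs
    have e : j l = L.getD (l - l) 0 := hjeq l hl1
    rcases Nat.eq_zero_or_pos s with hs0|hpos
    · rw [hs0] at hsv
      rw [e, show l - l = 0 by omega]
      omega
    · have := sorted_getD_lt hLsort (show l - l < s by omega) (by rw [hLlen]; omega)
      omega
  have hjmono : ∀ i₁ i₂, 1 ≤ i₁ → i₁ < i₂ → i₂ ≤ l → j i₂ < j i₁ := by
    intro i₁ i₂ h1 h2 h3
    induction i₂ with
    | zero => omega
    | succ t ih =>
      have hd := hjdec (t+1) (by omega) h3
      rw [show t + 1 - 1 = t by omega] at hd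
      rcases Nat.lt_or_ge i₁ t with h|h
      · exact lt_trans hd (ih h (by omega))
      · have he : i₁ = t := by omega
        rw [he]
        exact hd
  -- positions and columns
  have hex : ∀ i : ℕ, ∃ y, M + 1 ≤ y ∧ j i < w y := by
    intro i
    refine ⟨n + 1 + j i, by omega, ?_⟩
    rw [hwfix (n + 1 + j i) (by omega)]
    omega
  set c : ℕ → ℕ := fun i => if i = 0 then n else Nat.find (hex i) - 1 with hcdef
  set b : ℕ → ℕ := fun i => w.symm (j i) with hbdef
  have hc0 : c 0 = n := by simp [hcdef]
  have hceq : ∀ i, 1 ≤ i → c i = Nat.find (hex i) - 1 := by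
    intro i hi
    rw [hcdef]
    simp only [if_neg (show ¬ i = 0 by omega)]
  have hcfind : ∀ i, 1 ≤ i → i ≤ l →
      M + 1 ≤ c i ∧ c i ≤ n ∧ j i < w (c i + 1) ∧ ∀ y, M + 1 ≤ y → y ≤ c i → w y ≤ j i := by
    intro i h1 h2
    have hji := hJval _ (hjJ i h1 h2)
    have hce := hceq i h1
    have hfind := Nat.find_spec (hex i)
    have hfle : Nat.find (hex i) ≤ n + 1 :=
      Nat.find_le ⟨by omega, by rw [hwfix (n+1) (by omega)]; omega⟩
    have hfgt : M + 1 < Nat.find (hex i) := by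
      rcases eq_or_lt_of_le hfind.1 with heq|h
      · exfalso
        have h5 := hfind.2
        rw [← heq, ← hrdef] at h5
        omega
      · exact h
    refine ⟨by omega, by omega, ?_, ?_⟩
    · rw [hce, show Nat.find (hex i) - 1 + 1 = Nat.find (hex i) from by omega]
      exact hfind.2
    · intro y hy1 hy2
      by_contra hcon
      push_neg at hcon
      exact Nat.find_min (hex i) (by omega) ⟨hy1, hcon⟩
  -- ########## STAGE 3 ##########
  have hdich : ∀ i, 1 ≤ i → i ≤ l →
      (j (i-1) = j i + 1 ∧ c (i-1) = c i) ∨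
      (j i + 1 < j (i-1) ∧ w (c i + 1) = j i + 1 ∧ c i < c (i-1)) := by
    intro i h1 h2
    have hd := hjdec i h1 h2
    obtain ⟨hci1, hci2, hci3, hci4⟩ := hcfind i h1 h2
    have hji := hJval _ (hjJ i h1 h2)
    rcases eq_or_lt_of_le (show j i + 1 ≤ j (i-1) by omega) with heq|hlt
    · left
      refine ⟨heq.symm, ?_⟩
      rcases eq_or_lt_of_le h1 with he1|hgt1
      · -- i = 1
        have hi0 : i - 1 = 0 := by omega
        have hj1n : j i = n := by
          have := hj0
          rw [hi0] at heq
          omega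
        have hf1 : Nat.find (hex i) = n + 1 := by
          apply le_antisymm
          · exact Nat.find_le ⟨by omega, by rw [hwfix (n+1) (by omega)]; omega⟩
          · rw [Nat.le_find_iff]
            intro m hm hcon2
            have := (hwmem m (by omega) (by omega)).2
            omega
        rw [hi0, hc0, hceq i h1, hf1]
        omega
      · -- i ≥ 2
        have hbi1 := hJval _ (hjJ (i-1) (by omega) (by omega))
        have hkey : ∀ y, M + 1 ≤ y → (j i < w y ↔ j (i-1) < w y) := by
          intro y hy
          constructor
          · intro h
            have hne2 : w y ≠ j (i-1) := by
              intro he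
              have hsy : w.symm (j (i-1)) = y := by rw [← he, w.symm_apply_apply]
              omega
            omega
          · intro h; omega
        have e1 : c (i-1) = Nat.find (hex (i-1)) - 1 := hceq (i-1) (by omega)
        have e2 : c i = Nat.find (hex i) - 1 := hceq i h1
        have hfa : Nat.find (hex i) ≤ Nat.find (hex (i-1)) := by
          apply Nat.find_le
          have hs := Nat.find_spec (hex (i-1))
          exact ⟨hs.1, (hkey _ hs.1).mpr hs.2⟩
        have hfb : Nat.find (hex (i-1)) ≤ Nat.find (hex i) := by
          apply Nat.find_le
          have hs := Nat.find_spec (hex i)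
          exact ⟨hs.1, (hkey _ hs.1).mp hs.2⟩
        rw [e1, e2]
        omega
    · right
      have hvn : j i + 1 ≤ n := by
        rcases Nat.eq_zero_or_pos (i-1) with h0|h0
        · have hjj : j (i-1) = n + 1 := by rw [h0, hj0]
          omega
        · have := (hJval _ (hjJ (i-1) h0 (by omega))).2.1
          omega
      have hnotJ : (j i + 1) ∉ J := by
        intro hmem
        have := hgap i (j i + 1) h1 h2 hmem (by omega)
        omega
      have hsy := hwsymmem (j i + 1) (by omega) hvn
      have hsymm_gtM : M + 1 ≤ w.symm (j i + 1) := by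
        by_contra hcon
        push_neg at hcon
        apply hnotJ
        rw [hJmem]
        exact ⟨by omega, w.symm (j i + 1), by omega, by omega, w.apply_symm_apply _⟩
      have hfle2 : c i + 1 ≤ w.symm (j i + 1) := by
        have h5 : Nat.find (hex i) ≤ w.symm (j i + 1) :=
          Nat.find_le ⟨hsymm_gtM, by rw [w.apply_symm_apply]; omega⟩
        have e2 : c i = Nat.find (hex i) - 1 := hceq i h1
        have h6 := (Nat.find_spec (hex i)).1
        omega
      have hwc : w (c i + 1) = j i + 1 := by
        have h2' := hmono (c i + 1) (w.symm (j i + 1)) (by omega) hfle2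
        rw [w.apply_symm_apply] at h2'
        omega
      refine ⟨hlt, hwc, ?_⟩
      rcases Nat.eq_zero_or_pos (i-1) with h0|h0
      · rw [h0, hc0]
        omega
      · obtain ⟨hd1, hd2, hd3, hd4⟩ := hcfind (i-1) h0 (by omega)
        by_contra hcon
        push_neg at hcon
        rcases eq_or_lt_of_le hcon with he|hlt2
        · rw [he] at hd3
          omega
        · have := hci4 (c (i-1) + 1) (by omega) (by omega)
          omega
  have hcval : ∀ i, 1 ≤ i → i ≤ l → (∀ x, 1 ≤ x → x ≤ M → w x ≠ j i - 1) →
      w (c i) = j i - 1 := by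
    intro i h1 h2 hnot
    obtain ⟨hc1, hc2, hc3, hc4⟩ := hcfind i h1 h2
    have hji := hJval _ (hjJ i h1 h2)
    rcases eq_or_lt_of_le (show r ≤ j i - 1 by omega) with heq|hlt
    · -- j i = r + 1 : c i = M + 1
      have hle : c i ≤ M + 1 := by
        by_contra hcon
        push_neg at hcon
        have h5 := hc4 (M+2) (by omega) (by omega)
        have h6 : r < w (M+2) := by
          rw [hrdef, show M+2 = M+1+1 by omega]
          exact hinc (M+1) le_rfl
        have hne : w (M+2) ≠ j i := by
          intro he
          have hsy : w.symm (j i) = M + 2 := by rw [← he, w.symm_apply_apply]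
          omega
        omega
      have hcM : c i = M + 1 := by omega
      rw [hcM, ← hrdef]
      omega
    · have hvn2 : j i - 1 ≤ n := by omega
      have hsy := hwsymmem (j i - 1) (by omega) hvn2
      have hgtM : M + 1 ≤ w.symm (j i - 1) := by
        by_contra hcon
        push_neg at hcon
        exact hnot _ (by omega) (by omega) (w.apply_symm_apply _)
      have hyle : w.symm (j i - 1) ≤ c i := by
        by_contra hcon
        push_neg at hcon
        have h5 := hmono (c i + 1) (w.symm (j i - 1)) (by omega) (by omega)
        rw [w.apply_symm_apply] at h5
        omega
      have h5 := hmono (w.symm (j i - 1)) (c i) hgtM hyle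
      rw [w.apply_symm_apply] at h5
      have h6 := hc4 (c i) hc1 le_rfl
      have hne : w (c i) ≠ j i := by
        intro he
        have hsy2 : w.symm (j i) = c i := by rw [← he, w.symm_apply_apply]
        omega
      omega
  have hconsec : ∀ x, M + 1 ≤ x → (∀ x', 1 ≤ x' → x' ≤ M → w x' ≠ w x + 1) →
      w x + 1 ≤ n → w (x+1) = w x + 1 := by
    intro x hx hnot hle
    have hsy := hwsymmem (w x + 1) (by omega) hle
    have hgtM : M + 1 ≤ w.symm (w x + 1) := by
      by_contra hcon
      push_neg at hcon
      exact hnot _ (by omega) (by omega) (w.apply_symm_apply _)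
    have hygt : x < w.symm (w x + 1) := by
      by_contra hcon
      push_neg at hcon
      have h5 := hmono (w.symm (w x + 1)) x hgtM hcon
      rw [w.apply_symm_apply] at h5
      omega
    have h1 := hmono (x+1) (w.symm (w x + 1)) (by omega) (by omega)
    rw [w.apply_symm_apply] at h1
    have h2 := hinc x hx
    omega
  -- the intermediate permutations, as functions
  set P : ℕ → ℕ → ℕ := fun i x =>
    if x ≤ M then (if r < w x ∧ w x < j i then w x - 1 else w x)
    else if x < c i then w (x+1) - 1
    else if x = c i then j i - 1
    else w x with hPdef
  have hPl : ∀ x, P l x = w x := by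
    intro x
    obtain ⟨hc1, hc2, hc3, hc4⟩ := hcfind l hl1 le_rfl
    have hjl := hJval _ (hjJ l hl1 le_rfl)
    by_cases h1 : x ≤ M
    · rw [hPdef]
      simp only [if_pos h1]
      rcases Nat.eq_zero_or_pos x with hx0|hx1
      · have h0 : w 0 = 0 := hwfix 0 (by omega)
        rw [hx0, h0, if_neg (by omega)]
      · rcases hposJ x hx1 h1 with h|h
        · rw [if_neg (by omega)]
        · have := hminJ _ h
          rw [if_neg (by omega)]
    · push_neg at h1
      rw [hPdef]
      simp only [if_neg (show ¬ x ≤ M by omega)]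
      by_cases h2 : x < c l
      · rw [if_pos h2]
        have hwx := hc4 x (by omega) (by omega)
        have hwxlt : w x < j l := by
          rcases eq_or_lt_of_le hwx with he|hh
          · exfalso
            have hsy : w.symm (j l) = x := by rw [← he, w.symm_apply_apply]
            omega
          · exact hh
        have hrwx : r ≤ w x := by
          have := hmono (M+1) x le_rfl (by omega)
          rw [← hrdef] at this
          omega
        have hnot : ∀ x', 1 ≤ x' → x' ≤ M → w x' ≠ w x + 1 := by
          intro x' h1' h2' he
          rcases hposJ x' h1' h2' with hh|hh
          · omega
          · have hge := hminJ _ hh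
            have hx1c : x + 1 ≤ c l := by omega
            have ha := hc4 (x+1) (by omega) hx1c
            have hb := hinc x (by omega)
            have hne : w (x+1) ≠ j l := by
              intro he2
              have hsy : w.symm (j l) = x + 1 := by rw [← he2, w.symm_apply_apply]
              omega
            omega
        have := hconsec x (by omega) hnot (by omega)
        omega
      · by_cases h3 : x = c l
        · rw [if_neg h2, if_pos h3, h3]
          refine (hcval l hl1 le_rfl (fun x' h1' h2' he => ?_)).symm
          rcases hposJ x' h1' h2' with hh|hh
          · omega
          · have := hminJ _ hh
            omega
        · rw [if_neg h2, if_neg h3]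
  -- key step lemma
  have hstep : ∀ i, 1 ≤ i → i ≤ l → ∀ x,
      P (i-1) x = P i (Equiv.swap (b i) (c i) x) := by
    intro i h1 h2 x
    obtain ⟨hc1, hc2, hc3, hc4⟩ := hcfind i h1 h2
    have hji := hJval _ (hjJ i h1 h2)
    have hwb : w (b i) = j i := by rw [hbdef]; exact w.apply_symm_apply _
    have hbM : b i ≤ M := by rw [hbdef]; exact hji.2.2.2
    have hb1 : 1 ≤ b i := by rw [hbdef]; exact hji.2.2.1
    have hjdeci := hjdec i h1 h2
    rcases eq_or_ne x (b i) with hxb|hxb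
    · rw [hxb, Equiv.swap_apply_left, hPdef]
      simp only [if_pos hbM, if_neg (show ¬ c i ≤ M by omega),
        if_neg (show ¬ c i < c i by omega), if_pos rfl, hwb]
      rw [if_pos ⟨hji.1, hjdeci⟩]
      simp
    · rcases eq_or_ne x (c i) with hxc|hxc
      · rw [hxc, Equiv.swap_apply_right, hPdef]
        simp only [if_pos hbM, if_neg (show ¬ c i ≤ M by omega), hwb]
        rw [if_neg (show ¬ (r < j i ∧ j i < j i) by omega)]
        rcases hdich i h1 h2 with ⟨hA1, hA2⟩|⟨hB1, hB2, hB3⟩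
        · rw [hA2, if_neg (show ¬ c i < c i by omega), if_pos rfl]
          omega
        · rw [if_pos (show c i < c (i-1) from hB3)]
          omega
      · rw [Equiv.swap_apply_of_ne_of_ne hxb hxc]
        by_cases hxM : x ≤ M
        · rw [hPdef]
          simp only [if_pos hxM]
          rcases Nat.eq_zero_or_pos x with hx0|hx1
          · have h0 : w 0 = 0 := hwfix 0 (by omega)
            rw [hx0, h0, if_neg (by omega), if_neg (by omega)]
          · by_cases hcond : r < w x ∧ w x < j i
            · rw [if_pos hcond, if_pos ⟨hcond.1, by omega⟩]
            · rw [if_neg hcond, if_neg ?_]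
              intro ⟨ha', hb'⟩
              have hwxJ : w x ∈ J := by
                rcases hposJ x hx1 hxM with hh|hh
                · omega
                · exact hh
              have hwxge : j i ≤ w x := by omega
              rcases eq_or_lt_of_le hwxge with he|hh
              · apply hxb
                rw [hbdef]
                simp only
                rw [he, w.symm_apply_apply]
              · have := hgap i (w x) h1 h2 hwxJ hh
                omega
        · push_neg at hxM
          rcases hdich i h1 h2 with ⟨hA1, hA2⟩|⟨hB1, hB2, hB3⟩
          · rw [hPdef]
            simp only [if_neg (show ¬ x ≤ M by omega), hA2]
            by_cases hxlt : x < c i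
            · rw [if_pos hxlt, if_pos hxlt]
            · rw [if_neg hxlt, if_neg hxlt, if_neg hxc, if_neg hxc]
          · by_cases hxlt : x < c i
            · rw [hPdef]
              simp only [if_neg (show ¬ x ≤ M by omega)]
              rw [if_pos hxlt, if_pos (show x < c (i-1) by omega)]
            · have hxgt : c i < x := by omega
              by_cases hxlt2 : x < c (i-1)
              · -- need w (x+1) = w x + 1
                have hwxge : j i + 1 ≤ w x := by
                  have := hmono (c i + 1) x (by omega) (by omega)
                  omega
                have hcons : w (x+1) = w x + 1 := by
                  rcases Nat.eq_zero_or_pos (i - 1) with h0|h0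
                  · -- i = 1 : top range
                    have hcc : c (i-1) = n := by rw [h0, hc0]
                    have hjj : j (i-1) = n + 1 := by rw [h0, hj0]
                    have hnot : ∀ x', 1 ≤ x' → x' ≤ M → w x' ≠ w x + 1 := by
                      intro x' ha' hb' he
                      rcases hposJ x' ha' hb' with hh|hh
                      · omega
                      · rcases Nat.lt_or_ge (j i) (w x') with hgt2|hle2
                        · have h6 := hgap i (w x') h1 h2 hh hgt2
                          have h7 := (hJval _ hh).2.1
                          omega
                        · omega
                    have hlen : w x + 1 ≤ n := by
                      have h5 := hinc x (by omega)
                      have h6 := (hwmem (x+1) (by omega) (by omega)).2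
                      omega
                    exact hconsec x (by omega) hnot hlen
                  · obtain ⟨hd1, hd2, hd3, hd4⟩ := hcfind (i-1) h0 (by omega)
                    have hji1 := hJval _ (hjJ (i-1) h0 (by omega))
                    have hwxle : w x ≤ j (i-1) := hd4 x (by omega) (by omega)
                    have hwxne : w x ≠ j (i-1) := by
                      intro he
                      have hsy : w.symm (j (i-1)) = x := by rw [← he, w.symm_apply_apply]
                      omega
                    have hnot : ∀ x', 1 ≤ x' → x' ≤ M → w x' ≠ w x + 1 := by
                      intro x' ha' hb' he
                      rcases hposJ x' ha' hb' with hh|hh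
                      · omega
                      · rcases eq_or_lt_of_le (show w x + 1 ≤ j (i-1) by omega) with heq2|hlt3
                        · have hx1le : x + 1 ≤ c (i-1) := by omega
                          have ha2 := hd4 (x+1) (by omega) hx1le
                          have hb2 := hinc x (by omega)
                          have hne2 : w (x+1) ≠ j (i-1) := by
                            intro he2
                            have hsy : w.symm (j (i-1)) = x+1 := by rw [← he2, w.symm_apply_apply]
                            omega
                          omega
                        · have := hgap i (w x') h1 h2 hh (by omega)
                          omega
                    have hlen : w x + 1 ≤ n := by
                      have := hji1.2.1
                      omega
                    exact hconsec x (by omega) hnot hlen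
                rw [hPdef]
                simp only [if_neg (show ¬ x ≤ M by omega)]
                rw [if_pos hxlt2, if_neg hxlt, if_neg hxc]
                omega
              · rcases eq_or_ne x (c (i-1)) with hxe|hxne2
                · -- x = c (i-1)
                  rcases Nat.eq_zero_or_pos (i - 1) with h0|h0
                  · have hcc : c (i-1) = n := by rw [h0, hc0]
                    have hjj : j (i-1) = n + 1 := by rw [h0, hj0]
                    -- w n = n
                    have hnJ : n ∉ J := by
                      intro hh
                      have := hgap i n h1 h2 hh (by omega)
                      omega
                    have hsy := hwsymmem n (by omega) le_rfl
                    have hgtM2 : M + 1 ≤ w.symm n := by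
                      by_contra hcon
                      push_neg at hcon
                      apply hnJ
                      rw [hJmem]
                      exact ⟨by omega, w.symm n, by omega, by omega, w.apply_symm_apply _⟩
                    have hwn : w n = n := by
                      have h5 := hmono (w.symm n) n hgtM2 hsy.2
                      rw [w.apply_symm_apply] at h5
                      have := (hwmem n (by omega) le_rfl).2
                      omega
                    rw [hPdef]
                    simp only [if_neg (show ¬ x ≤ M by omega)]
                    rw [if_neg (show ¬ x < c (i-1) by omega), if_pos hxe,
                      if_neg hxlt, if_neg hxc]
                    rw [hxe, hcc, hwn, hjj]
                    omega
                  · have hwc2 : w (c (i-1)) = j (i-1) - 1 := by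
                      apply hcval (i-1) h0 (by omega)
                      intro x' ha' hb' he
                      rcases hposJ x' ha' hb' with hh|hh
                      · omega
                      · have := hgap i (w x') h1 h2 hh (by omega)
                        omega
                    rw [hPdef]
                    simp only [if_neg (show ¬ x ≤ M by omega)]
                    rw [if_neg (show ¬ x < c (i-1) by omega), if_pos hxe,
                      if_neg hxlt, if_neg hxc]
                    rw [hxe, hwc2]
                · have hgt2 : c (i-1) < x := by omega
                  rw [hPdef]
                  simp only [if_neg (show ¬ x ≤ M by omega)]
                  rw [if_neg (show ¬ x < c (i-1) by omega), if_neg hxne2,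
                    if_neg hxlt, if_neg hxc]
  -- ########## STAGE 4 ##########
  have hPbc : ∀ i, 1 ≤ i → i ≤ l → P (i-1) (b i) = j i - 1 ∧ P (i-1) (c i) = j i := by
    intro i h1 h2
    obtain ⟨hc1, hc2, hc3, hc4⟩ := hcfind i h1 h2
    have hji := hJval _ (hjJ i h1 h2)
    have hwb : w (b i) = j i := by rw [hbdef]; exact w.apply_symm_apply _
    have hbM : b i ≤ M := by rw [hbdef]; exact hji.2.2.2
    constructor
    · have hs := hstep i h1 h2 (b i)
      rw [Equiv.swap_apply_left] at hs
      rw [hs, hPdef]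
      simp only [if_neg (show ¬ c i ≤ M by omega), if_neg (show ¬ c i < c i by omega),
        if_pos rfl]
      simp
    · have hs := hstep i h1 h2 (c i)
      rw [Equiv.swap_apply_right] at hs
      rw [hs, hPdef]
      simp only [if_pos hbM, hwb]
      rw [if_neg (show ¬ (r < j i ∧ j i < j i) by omega)]
  set b' : ℕ → ℕ := fun i => b (l + 1 - i) with hb'def
  set c' : ℕ → ℕ := fun i => c (l + 1 - i) with hc'def
  set u : Equiv.Perm ℕ := partialProd w b' c' l with hudef
  have hQ : ∀ t, t ≤ l → ∀ x, (partialProd w b' c' t) x = P (l - t) x := by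
    intro t
    induction t with
    | zero =>
      intro _ x
      show w x = P (l - 0) x
      rw [Nat.sub_zero]
      exact (hPl x).symm
    | succ t ih =>
      intro ht x
      show (partialProd w b' c' t * Equiv.swap (b' (t+1)) (c' (t+1))) x = P (l - (t+1)) x
      rw [Equiv.Perm.mul_apply, ih (by omega)]
      have hbb : b' (t+1) = b (l - t) := by rw [hb'def]; simp only; congr 1; omega
      have hcc : c' (t+1) = c (l - t) := by rw [hc'def]; simp only; congr 1; omega
      rw [hbb, hcc]
      have hs := hstep (l - t) (by omega) (by omega) x
      rw [show (l - t) - 1 = l - (t+1) by omega] at hs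
      exact hs.symm
  have hPP : ∀ s, s ≤ l → partialProd u b c s = partialProd w b' c' (l - s) := by
    intro s
    induction s with
    | zero =>
      intro _
      rw [Nat.sub_zero]
      exact hudef
    | succ s ih =>
      intro hs
      show partialProd u b c s * Equiv.swap (b (s+1)) (c (s+1)) = partialProd w b' c' (l - (s+1))
      rw [ih (by omega)]
      have hls : l - s = (l - (s+1)) + 1 := by omega
      rw [hls, partialProd_succ]
      have hb2 : b' ((l - (s+1)) + 1) = b (s+1) := by rw [hb'def]; simp only; congr 1; omega
      have hc2 : c' ((l - (s+1)) + 1) = c (s+1) := by rw [hc'def]; simp only; congr 1; omega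
      rw [hb2, hc2, mul_assoc, Equiv.swap_mul_self, mul_one]
  have hPPx : ∀ s, s ≤ l → ∀ x, (partialProd u b c s) x = P s x := by
    intro s hs x
    rw [hPP s hs]
    have := hQ (l - s) (by omega) x
    rwa [show l - (l - s) = s by omega] at this
  have huP : ∀ x, u x = P 0 x := fun x => hPPx 0 (by omega) x
  have hbr : ∀ i, 1 ≤ i → i ≤ l → 1 ≤ b i ∧ b i ≤ M ∧ M < c i ∧ c i ≤ n := by
    intro i h1 h2
    have hji := hJval _ (hjJ i h1 h2)
    obtain ⟨hc1, hc2, _, _⟩ := hcfind i h1 h2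
    exact ⟨by rw [hbdef]; exact hji.2.2.1, by rw [hbdef]; exact hji.2.2.2, by omega, hc2⟩
  have hInv : ∀ s, s ≤ l → invLen n (partialProd u b c s) = invLen n u + s := by
    intro s
    induction s with
    | zero => intro _; simp [partialProd]
    | succ s ih =>
      intro hs
      rw [partialProd_succ]
      obtain ⟨hx1, hx2, hx3, hx4⟩ := hbr (s+1) (by omega) (by omega)
      rw [invLen_swap n (partialProd u b c s) (b (s+1)) (c (s+1)) hx1 (by omega) hx4 ?_]
      · rw [ih (by omega)]; omega
      · obtain ⟨e1, e2⟩ := hPbc (s+1) (by omega) (by omega)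
        rw [show s + 1 - 1 = s by omega] at e1 e2
        rw [hPPx s (by omega), hPPx s (by omega), e1, e2]
        have hji := hJval _ (hjJ (s+1) (by omega) (by omega))
        omega
  -- ########## FINAL ASSEMBLY ##########
  refine ⟨u, ?_, ?_, ?_, ?_⟩
  · -- the pointwise formula
    intro x
    rw [huP x, hPdef]
    simp only [hc0, hj0]
    by_cases h1 : x ≤ M
    · rw [if_pos h1, if_pos h1]
      rcases Nat.eq_zero_or_pos x with hx0|hx1
      · have h0 : w 0 = 0 := hwfix 0 (by omega)
        rw [hx0, h0]
        rw [if_neg (by omega), if_pos (by omega)]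
      · have hwx := hwmem x hx1 (by omega)
        have hne : w x ≠ r := fun he => by have := w.injective (he.trans hrdef); omega
        by_cases h2 : w x < r
        · rw [if_neg (by omega), if_pos h2]
        · rw [if_pos ⟨by omega, by omega⟩, if_neg h2]
    · rw [if_neg h1, if_neg h1]
      push_neg at h1
      rcases Nat.lt_or_ge x n with h2|h2
      · rw [if_pos h2]
      · rcases eq_or_lt_of_le h2 with heq|hgt
        · rw [if_neg (by omega), if_pos heq.symm]
          rw [hwfix (x+1) (by omega)]
          omega
        · rw [if_neg (by omega), if_neg (by omega)]
          rw [hwfix x (by omega), hwfix (x+1) (by omega)]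
          omega
  · -- u fixes outside [1, n]
    intro x hx
    rw [huP x, hPdef]
    simp only [hc0, hj0]
    rcases Nat.eq_zero_or_pos x with hx0|hx1
    · have h0 : w 0 = 0 := hwfix 0 (by omega)
      rw [hx0, if_pos (by omega), h0, if_neg (by omega)]
    · have hxn : n < x := by omega
      rw [if_neg (by omega), if_neg (by omega), if_neg (by omega)]
      exact hwfix x (by omega)
  · -- descents of u only at a 1, ..., a k
    intro q hq1 hqn hlt
    rw [huP q, huP (q+1)] at hlt
    rcases Nat.lt_or_ge q M with hq|hq
    · have hd : w (q+1) < w q := by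
        have hwq := hwmem q hq1 (by omega)
        have hwq1 := hwmem (q+1) (by omega) (by omega)
        have hne : w q ≠ r := fun he => by have := w.injective (he.trans hrdef); omega
        have hne1 : w (q+1) ≠ r := fun he => by have := w.injective (he.trans hrdef); omega
        have hne2 : w q ≠ w (q+1) := fun he => by have := w.injective he; omega
        rw [hPdef] at hlt
        simp only [hj0, if_pos (show q ≤ M by omega), if_pos (show q+1 ≤ M by omega)] at hlt
        split_ifs at hlt <;> omega
      exact hwdesc q hq1 hqn hd
    · rcases eq_or_lt_of_le hq with heq|hgt
      · exact ⟨p, hp1, hpk, by omega⟩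
      · exfalso
        rw [hPdef] at hlt
        simp only [hc0, hj0, if_neg (show ¬ q ≤ M by omega),
          if_neg (show ¬ q + 1 ≤ M by omega)] at hlt
        rcases Nat.lt_or_ge (q+1) n with h2|h2
        · rw [if_pos (show q < n by omega), if_pos h2] at hlt
          have h5 := hinc (q+1) (by omega)
          have h6 := (hwmem (q+1) (by omega) (by omega)).1
          omega
        · have hqn2 : q + 1 = n := by omega
          rw [if_pos (show q < n by omega), if_neg (by omega), if_pos hqn2] at hlt
          rw [hqn2] at hlt
          have h7 := (hwmem n (by omega) le_rfl).2
          have h6 := (hwmem (q+1) (by omega) (by omega)).1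
          omega
  · -- the Pieri arrow
    have comp2 : w = partialProd u b c l := by
      have h5 := hPP l le_rfl
      rw [Nat.sub_self] at h5
      exact h5.symm
    have comp4 : ∀ i i', 1 ≤ i → i < i' → i' ≤ l → b i ≠ b i' := by
      intro i i' h1 h2 h3 he
      have hji' := hjmono i i' h1 h2 h3
      rw [hbdef] at he
      simp only at he
      have := w.symm.injective he
      omega
    exact ⟨b, c, hbr, comp2, fun i _ h2 => hInv i h2, comp4⟩
end

section
/- Let α = s_r ⋯ s_{a_p} and let u ∈ S_n(a) be a permutation lying in S_{r'} for some r' (i.e., fixing {r'+1,...,n}), with u constructed from w ∈ S_n(a) ∩ S_{r'+1} as in the recursion for Schubert polynomials. If u →_α v, then Σ_{i = a_p + 1}^{n} (u(i) - v(i)) ≥ ℓ(α); moreover Σ_{i=a_p+1}^n (u(i) - w(i)) = ℓ(α), hence v(a_p + 1) ≤ w(a_p + 1), with equality only if v = w. -/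
namespace RecTerm

def PP (n : ℕ) : Finset (ℕ × ℕ) :=
  ((Finset.Icc 1 n) ×ˢ (Finset.Icc 1 n)).filter (fun p => p.1 < p.2)

lemma mem_PP {n : ℕ} {q : ℕ × ℕ} :
    q ∈ PP n ↔ 1 ≤ q.1 ∧ q.1 ≤ n ∧ 1 ≤ q.2 ∧ q.2 ≤ n ∧ q.1 < q.2 := by
  simp [PP, Finset.mem_filter, Finset.mem_product, Finset.mem_Icc]
  tauto

lemma invLen_eq_sum (n : ℕ) (σ : Equiv.Perm ℕ) :
    invLen n σ = ∑ q ∈ PP n, (if σ q.2 < σ q.1 then 1 else 0) := by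
  rw [invLen, ← Finset.card_filter, PP, Finset.filter_filter]

def phiBC (b c : ℕ) (q : ℕ × ℕ) : ℕ × ℕ :=
  if q.2 = b then (q.1, c)
  else if q.1 = c then (b, q.2)
  else if q.1 = b ∧ c < q.2 then (c, q.2)
  else if q.2 = c ∧ q.1 < b then (q.1, b)
  else q

lemma phi_mem {n b c : ℕ} (hb : 1 ≤ b) (hbc : b < c) (hc : c ≤ n) {q : ℕ × ℕ}
    (hq : q ∈ PP n) : phiBC b c q ∈ PP n := by
  obtain ⟨x, y⟩ := q
  rw [mem_PP] at hq ⊢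
  simp only [phiBC]
  split_ifs <;> simp_all <;> omega

lemma phi_invol {n b c : ℕ} (hb : 1 ≤ b) (hbc : b < c) (hc : c ≤ n) {q : ℕ × ℕ}
    (hq : q ∈ PP n) : phiBC b c (phiBC b c q) = q := by
  obtain ⟨x, y⟩ := q
  rw [mem_PP] at hq
  obtain ⟨hx1, hxn, hy1, hyn, hxy⟩ := hq
  simp only [phiBC]
  split_ifs <;> simp_all [Prod.ext_iff] <;> omega

lemma sum_reindex {n b c : ℕ} (hb : 1 ≤ b) (hbc : b < c) (hc : c ≤ n)
    (g : ℕ × ℕ → ℕ) :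
    ∑ q ∈ PP n, g (phiBC b c q) = ∑ q ∈ PP n, g q :=
  Finset.sum_nbij' (phiBC b c) (phiBC b c)
    (fun q hq => phi_mem hb hbc hc hq) (fun q hq => phi_mem hb hbc hc hq)
    (fun q hq => phi_invol hb hbc hc hq) (fun q hq => phi_invol hb hbc hc hq)
    (fun _ _ => rfl)

lemma swap_eval (π : Equiv.Perm ℕ) (b c z : ℕ) (h1 : z ≠ b) (h2 : z ≠ c) :
    (π * Equiv.swap b c) z = π z := by
  rw [Equiv.Perm.mul_apply, Equiv.swap_apply_of_ne_of_ne h1 h2]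

lemma swap_eval_b (π : Equiv.Perm ℕ) (b c : ℕ) : (π * Equiv.swap b c) b = π c := by
  rw [Equiv.Perm.mul_apply, Equiv.swap_apply_left]

lemma swap_eval_c (π : Equiv.Perm ℕ) (b c : ℕ) : (π * Equiv.swap b c) c = π b := by
  rw [Equiv.Perm.mul_apply, Equiv.swap_apply_right]

lemma fst_mk (a b : ℕ) : ((a, b) : ℕ × ℕ).1 = a := rfl
lemma snd_mk (a b : ℕ) : ((a, b) : ℕ × ℕ).2 = b := rfl

lemma ite_le_ite {A B : Prop} [Decidable A] [Decidable B] (h : A → B) :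
    (if A then 1 else 0) ≤ (if B then 1 else 0) := by
  split_ifs with hA hB
  · exact le_refl 1
  · exact absurd (h hA) hB
  · exact Nat.zero_le _
  · exact Nat.zero_le _

lemma pair_ne {x y a b : ℕ} (h : ¬(x = a ∧ y = b)) : (x, y) ≠ (a, b) := by
  intro he
  exact h ⟨congrArg Prod.fst he, congrArg Prod.snd he⟩

lemma phi_else {b c x y : ℕ} (h1 : y ≠ b) (h2 : x ≠ c) (h3 : ¬(x = b ∧ c < y))
    (h4 : ¬(y = c ∧ x < b)) : phiBC b c (x, y) = (x, y) := by
  simp only [phiBC]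
  rw [if_neg h1, if_neg h2, if_neg h3, if_neg h4]

lemma invLen_swap_lt {n b c : ℕ} (π : Equiv.Perm ℕ)
    (hb : 1 ≤ b) (hbc : b < c) (hc : c ≤ n) (hlt : π b < π c) :
    invLen n π + 1 ≤ invLen n (π * Equiv.swap b c) := by
  have hbcP : (b, c) ∈ PP n := by rw [mem_PP]; exact ⟨hb, by omega, by omega, hc, hbc⟩
  have key : ∀ q ∈ PP n,
      ((if π q.2 < π q.1 then 1 else 0) + (if q = (b, c) then 1 else 0))
      ≤ (if (π * Equiv.swap b c) ((phiBC b c q).2) < (π * Equiv.swap b c) ((phiBC b c q).1) then 1 else 0) := by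
    rintro ⟨x, y⟩ hq
    rw [mem_PP] at hq
    simp only [fst_mk, snd_mk] at hq
    obtain ⟨hx1, hxn, hy1, hyn, hxy⟩ := hq
    by_cases h1 : y = b
    · have hphi : phiBC b c (x, y) = (x, c) := by simp [phiBC, h1]
      rw [hphi, if_neg (pair_ne (by omega))]
      simp only [fst_mk, snd_mk]
      rw [swap_eval_c π b c, swap_eval π b c x (by omega) (by omega), h1]
      exact Nat.le_of_eq (Nat.add_zero _)
    · by_cases h2 : x = c
      · have hphi : phiBC b c (x, y) = (b, y) := by simp [phiBC, h1, h2]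
        rw [hphi, if_neg (pair_ne (by omega))]
        simp only [fst_mk, snd_mk]
        rw [swap_eval π b c y h1 (by omega), swap_eval_b π b c, h2]
        exact Nat.le_of_eq (Nat.add_zero _)
      · by_cases h3 : x = b ∧ c < y
        · have h3b := h3.2
          have hphi : phiBC b c (x, y) = (c, y) := by
            simp only [phiBC]
            rw [if_neg h1, if_neg h2, if_pos h3]
          rw [hphi, if_neg (pair_ne (by omega))]
          simp only [fst_mk, snd_mk]
          rw [swap_eval π b c y h1 (by omega), swap_eval_c π b c, h3.1]
          exact Nat.le_of_eq (Nat.add_zero _)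
        · by_cases h4 : y = c ∧ x < b
          · have h4b := h4.2
            have hphi : phiBC b c (x, y) = (x, b) := by
              simp only [phiBC]
              rw [if_neg h1, if_neg h2, if_neg h3, if_pos h4]
            rw [hphi, if_neg (pair_ne (by omega))]
            simp only [fst_mk, snd_mk]
            rw [swap_eval_b π b c, swap_eval π b c x (by omega) (by omega), h4.1]
            exact Nat.le_of_eq (Nat.add_zero _)
          · rw [phi_else h1 h2 h3 h4]
            simp only [fst_mk, snd_mk]
            by_cases hxb : x = b
            · by_cases hyc : y = c
              · rw [hxb, hyc, if_neg (show ¬ π c < π b by omega),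
                  if_pos (rfl : ((b, c) : ℕ × ℕ) = (b, c)),
                  swap_eval_c π b c, swap_eval_b π b c, if_pos hlt]
              · rw [hxb, if_neg (pair_ne (by omega)), swap_eval π b c y h1 hyc,
                  swap_eval_b π b c, Nat.add_zero]
                exact ite_le_ite (fun h => lt_trans h hlt)
            · by_cases hyc : y = c
              · rw [hyc, if_neg (pair_ne (by omega)), swap_eval_c π b c,
                  swap_eval π b c x hxb h2, Nat.add_zero]
                exact ite_le_ite (fun h => lt_trans hlt h)
              · rw [if_neg (pair_ne (by omega)), swap_eval π b c y h1 hyc,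
                  swap_eval π b c x hxb h2, Nat.add_zero]
  calc invLen n π + 1
      = (∑ q ∈ PP n, (if π q.2 < π q.1 then 1 else 0))
        + (∑ q ∈ PP n, (if q = (b, c) then 1 else 0)) := by
        rw [← invLen_eq_sum]
        congr 1
        rw [Finset.sum_ite_eq' (PP n) (b, c) (fun _ => 1), if_pos hbcP]
    _ = ∑ q ∈ PP n, ((if π q.2 < π q.1 then 1 else 0) + (if q = (b, c) then 1 else 0)) := by
        rw [Finset.sum_add_distrib]
    _ ≤ ∑ q ∈ PP n, (if (π * Equiv.swap b c) ((phiBC b c q).2) < (π * Equiv.swap b c) ((phiBC b c q).1) then 1 else 0) :=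
        Finset.sum_le_sum key
    _ = ∑ q ∈ PP n, (if (π * Equiv.swap b c) q.2 < (π * Equiv.swap b c) q.1 then 1 else 0) :=
        sum_reindex hb hbc hc (fun q => if (π * Equiv.swap b c) q.2 < (π * Equiv.swap b c) q.1 then 1 else 0)
    _ = invLen n (π * Equiv.swap b c) := (invLen_eq_sum n _).symm


lemma invLen_swap_mid {n b c y0 : ℕ} (π : Equiv.Perm ℕ)
    (hb : 1 ≤ b) (hbc : b < c) (hc : c ≤ n) (hlt : π b < π c)
    (hy0b : b < y0) (hy0c : y0 < c) (hm1 : π b < π y0) (hm2 : π y0 < π c) :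
    invLen n π + 3 ≤ invLen n (π * Equiv.swap b c) := by
  have hbcP : (b, c) ∈ PP n := by rw [mem_PP]; exact ⟨hb, by omega, by omega, hc, hbc⟩
  have hbyP : (b, y0) ∈ PP n := by rw [mem_PP]; exact ⟨hb, by omega, by omega, by omega, hy0b⟩
  have hycP : (y0, c) ∈ PP n := by rw [mem_PP]; exact ⟨by omega, by omega, by omega, hc, hy0c⟩
  have key : ∀ q ∈ PP n,
      ((if π q.2 < π q.1 then 1 else 0) +
        ((if q = (b, c) then 1 else 0) + (if q = (b, y0) then 1 else 0)
          + (if q = (y0, c) then 1 else 0)))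
      ≤ (if (π * Equiv.swap b c) ((phiBC b c q).2) < (π * Equiv.swap b c) ((phiBC b c q).1)
          then 1 else 0) := by
    rintro ⟨x, y⟩ hq
    rw [mem_PP] at hq
    simp only [fst_mk, snd_mk] at hq
    obtain ⟨hx1, hxn, hy1, hyn, hxy⟩ := hq
    by_cases h1 : y = b
    · have hphi : phiBC b c (x, y) = (x, c) := by simp [phiBC, h1]
      rw [hphi, if_neg (pair_ne (by omega)), if_neg (pair_ne (by omega)),
        if_neg (pair_ne (by omega))]
      simp only [fst_mk, snd_mk]
      rw [swap_eval_c π b c, swap_eval π b c x (by omega) (by omega), h1]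
      omega
    · by_cases h2 : x = c
      · have hphi : phiBC b c (x, y) = (b, y) := by simp [phiBC, h1, h2]
        rw [hphi, if_neg (pair_ne (by omega)), if_neg (pair_ne (by omega)),
          if_neg (pair_ne (by omega))]
        simp only [fst_mk, snd_mk]
        rw [swap_eval π b c y h1 (by omega), swap_eval_b π b c, h2]
        omega
      · by_cases h3 : x = b ∧ c < y
        · have h3b := h3.2
          have hphi : phiBC b c (x, y) = (c, y) := by
            simp only [phiBC]
            rw [if_neg h1, if_neg h2, if_pos h3]
          rw [hphi, if_neg (pair_ne (by omega)), if_neg (pair_ne (by omega)),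
            if_neg (pair_ne (by omega))]
          simp only [fst_mk, snd_mk]
          rw [swap_eval π b c y h1 (by omega), swap_eval_c π b c, h3.1]
          omega
        · by_cases h4 : y = c ∧ x < b
          · have h4b := h4.2
            have hphi : phiBC b c (x, y) = (x, b) := by
              simp only [phiBC]
              rw [if_neg h1, if_neg h2, if_neg h3, if_pos h4]
            rw [hphi, if_neg (pair_ne (by omega)), if_neg (pair_ne (by omega)),
              if_neg (pair_ne (by omega))]
            simp only [fst_mk, snd_mk]
            rw [swap_eval_b π b c, swap_eval π b c x (by omega) (by omega), h4.1]
            omega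
          · rw [phi_else h1 h2 h3 h4]
            simp only [fst_mk, snd_mk]
            by_cases hxb : x = b
            · by_cases hyc : y = c
              · rw [hxb, hyc, if_neg (show ¬ π c < π b by omega),
                  if_pos (rfl : ((b, c) : ℕ × ℕ) = (b, c)),
                  if_neg (pair_ne (by omega)), if_neg (pair_ne (by omega)),
                  swap_eval_c π b c, swap_eval_b π b c, if_pos hlt]
              · by_cases hyy : y = y0
                · rw [hxb, hyy, if_neg (show ¬ π y0 < π b by omega),
                    if_neg (pair_ne (by omega)),
                    if_pos (rfl : ((b, y0) : ℕ × ℕ) = (b, y0)),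
                    if_neg (pair_ne (by omega)),
                    swap_eval π b c y0 (by omega) (by omega), swap_eval_b π b c,
                    if_pos hm2]
                · rw [hxb, if_neg (pair_ne (by omega)), if_neg (pair_ne (by omega)),
                    if_neg (pair_ne (by omega)), swap_eval π b c y h1 hyc,
                    swap_eval_b π b c]
                  have := ite_le_ite (A := π y < π b) (B := π y < π c)
                    (fun h => lt_trans h hlt)
                  omega
            · by_cases hyc : y = c
              · by_cases hxy0 : x = y0
                · rw [hxy0, hyc, if_neg (show ¬ π c < π y0 by omega),
                    if_neg (pair_ne (by omega)), if_neg (pair_ne (by omega)),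
                    if_pos (rfl : ((y0, c) : ℕ × ℕ) = (y0, c)),
                    swap_eval_c π b c, swap_eval π b c y0 (by omega) (by omega),
                    if_pos hm1]
                · rw [hyc, if_neg (pair_ne (by omega)), if_neg (pair_ne (by omega)),
                    if_neg (pair_ne (by omega)), swap_eval_c π b c,
                    swap_eval π b c x hxb h2]
                  have := ite_le_ite (A := π c < π x) (B := π b < π x)
                    (fun h => lt_trans hlt h)
                  omega
              · rw [if_neg (pair_ne (by omega)), if_neg (pair_ne (by omega)),
                  if_neg (pair_ne (by omega)), swap_eval π b c y h1 hyc,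
                  swap_eval π b c x hxb h2]
                omega
  calc invLen n π + 3
      = (∑ q ∈ PP n, (if π q.2 < π q.1 then 1 else 0))
        + ((∑ q ∈ PP n, (if q = (b, c) then 1 else 0))
          + (∑ q ∈ PP n, (if q = (b, y0) then 1 else 0))
          + (∑ q ∈ PP n, (if q = (y0, c) then 1 else 0))) := by
        rw [← invLen_eq_sum,
          Finset.sum_ite_eq' (PP n) (b, c) (fun _ => 1), if_pos hbcP,
          Finset.sum_ite_eq' (PP n) (b, y0) (fun _ => 1), if_pos hbyP,
          Finset.sum_ite_eq' (PP n) (y0, c) (fun _ => 1), if_pos hycP]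
    _ = ∑ q ∈ PP n, ((if π q.2 < π q.1 then 1 else 0) +
          ((if q = (b, c) then 1 else 0) + (if q = (b, y0) then 1 else 0)
            + (if q = (y0, c) then 1 else 0))) := by
        rw [Finset.sum_add_distrib, Finset.sum_add_distrib, Finset.sum_add_distrib]
    _ ≤ ∑ q ∈ PP n, (if (π * Equiv.swap b c) ((phiBC b c q).2)
            < (π * Equiv.swap b c) ((phiBC b c q).1) then 1 else 0) :=
        Finset.sum_le_sum key
    _ = ∑ q ∈ PP n, (if (π * Equiv.swap b c) q.2 < (π * Equiv.swap b c) q.1 then 1 else 0) :=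
        sum_reindex hb hbc hc
          (fun q => if (π * Equiv.swap b c) q.2 < (π * Equiv.swap b c) q.1 then 1 else 0)
    _ = invLen n (π * Equiv.swap b c) := (invLen_eq_sum n _).symm

/-- From a length-increase-by-one step, extract ascent and no-middle. -/
lemma step_facts {n b c : ℕ} (π : Equiv.Perm ℕ)
    (hb : 1 ≤ b) (hbc : b < c) (hc : c ≤ n)
    (hinv : invLen n (π * Equiv.swap b c) = invLen n π + 1) :
    π b < π c ∧ ∀ y, b < y → y < c → ¬(π b < π y ∧ π y < π c) := by
  have hne : π b ≠ π c := fun h => by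
    have := π.injective h; omega
  have hasc : π b < π c := by
    rcases Nat.lt_or_ge (π b) (π c) with h | h
    · exact h
    · exfalso
      have hgt : π c < π b := by omega
      set σ := π * Equiv.swap b c with hσ
      have hσb : σ b = π c := swap_eval_b π b c
      have hσc : σ c = π b := swap_eval_c π b c
      have h2 : invLen n σ + 1 ≤ invLen n (σ * Equiv.swap b c) := by
        apply invLen_swap_lt σ hb hbc hc
        rw [hσb, hσc]; exact hgt
      have h3 : σ * Equiv.swap b c = π := by
        rw [hσ, mul_assoc, Equiv.swap_mul_self, mul_one]
      rw [h3, hinv] at h2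
      omega
  refine ⟨hasc, ?_⟩
  rintro y hby hyc ⟨hm1, hm2⟩
  have := invLen_swap_mid π hb hbc hc hasc hby hyc hm1 hm2
  omega

end RecTerm

open RecTerm in
theorem recursion_termination (n k : ℕ) (a : ℕ → ℕ)
    (hk : 1 ≤ k) (ha0 : a 0 = 0) (hak : a (k + 1) = n)
    (hamono : ∀ i, i ≤ k → a i < a (i + 1))
    (w : Equiv.Perm ℕ) (hwfix : ∀ i, ¬(1 ≤ i ∧ i ≤ n) → w i = i)
    (hwdesc : ∀ q, 1 ≤ q → q < n → w (q + 1) < w q → ∃ i, 1 ≤ i ∧ i ≤ k ∧ q = a i)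
    (hwne : w ≠ 1)
    -- `p ≤ k` is maximal such that `w (a p + 1) ≠ a p + 1`
    (p : ℕ) (hp1 : 1 ≤ p) (hpk : p ≤ k)
    (hpne : w (a p + 1) ≠ a p + 1)
    (hpmax : ∀ q, p < q → q ≤ k → w (a q + 1) = a q + 1)
    -- `u` is constructed from `w` as in the recursion for Schubert polynomials
    (u : Equiv.Perm ℕ)
    (hu : ∀ i, u i = if i ≤ a p then (if w i < w (a p + 1) then w i else w i - 1)
      else w (i + 1) - 1)
    (hufix : ∀ i, ¬(1 ≤ i ∧ i ≤ n) → u i = i)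
    (hudesc : ∀ q, 1 ≤ q → q < n → u (q + 1) < u q → ∃ i, 1 ≤ i ∧ i ≤ k ∧ q = a i)
    -- `u ∈ S_{r'}` and `w ∈ S_{r'+1}`
    (r' : ℕ) (hr'n : r' < n) (hur' : ∀ i, r' < i → u i = i) (hwr' : ∀ i, r' + 1 < i → w i = i)
    (v : Equiv.Perm ℕ)
    (harrow : PieriArrow n (w (a p + 1)) (a p) u v) :
    ((a p + 1 - w (a p + 1) : ℤ) ≤
        ∑ i ∈ Finset.Icc (a p + 1) n, ((u i : ℤ) - (v i : ℤ))) ∧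
    (∑ i ∈ Finset.Icc (a p + 1) n, ((u i : ℤ) - (w i : ℤ))
        = (a p + 1 - w (a p + 1) : ℤ)) ∧
    v (a p + 1) ≤ w (a p + 1) ∧
    (v (a p + 1) = w (a p + 1) → v = w) := by

  classical
  obtain ⟨b, c, hbc0, hvP, hlen, hdist⟩ := harrow
  set m := a p with hm
  set r := w (m + 1) with hr
  set l := m - r + 1 with hl
  -- ## basic facts about a
  have ha_mono : ∀ j, j ≤ k + 1 → ∀ i, i < j → a i < a j := by
    intro j
    induction j with
    | zero => omega
    | succ j ih =>
      intro hj i hi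
      rcases Nat.lt_or_ge i j with h | h
      · exact lt_trans (ih (by omega) i h) (hamono j (by omega))
      · have : i = j := by omega
        subst this
        exact hamono i (by omega)
  have hm1 : 1 ≤ m := by
    have := ha_mono p (by omega) 0 (by omega)
    omega
  have hmn : m + 1 ≤ n := by
    have := ha_mono (k+1) (by omega) p (by omega)
    omega
  -- ## basic facts about w
  have hw0 : w 0 = 0 := hwfix 0 (by omega)
  have hwbig : ∀ i, n < i → w i = i := fun i hi => hwfix i (by omega)
  have hwrange : ∀ i, 1 ≤ i → i ≤ n → 1 ≤ w i ∧ w i ≤ n := by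
    intro i h1 h2
    by_contra h
    have h3 := hwfix (w i) h
    have h4 := w.injective h3
    rw [h4] at h
    exact h ⟨h1, h2⟩
  have hwpos : ∀ i, 1 ≤ i → 1 ≤ w i := by
    intro i h1
    by_contra h
    have : w i = 0 := by omega
    rw [← hw0] at this
    have := w.injective this
    omega
  have hr1 : 1 ≤ r := hwpos (m+1) (by omega)
  have hwinc : ∀ i, 1 ≤ i → i < n → (∀ j, 1 ≤ j → j ≤ k → i ≠ a j) → w i < w (i+1) := by
    intro i h1 h2 h3
    rcases Nat.lt_or_ge (w (i+1)) (w i) with h | h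
    · obtain ⟨j, hj1, hj2, hj3⟩ := hwdesc i h1 h2 h
      exact absurd hj3 (h3 j hj1 hj2)
    · have : w i ≠ w (i+1) := fun hh => by have := w.injective hh; omega
      omega
  -- w is the identity above a (p+1)
  have hId : ∀ d, d ≤ k - p → ∀ x, a (k + 1 - d) < x → w x = x := by
    intro d
    induction d with
    | zero =>
      intro _ x hx
      have : n < x := by rw [← hak]; simpa using hx
      exact hwbig x this
    | succ d ih =>
      intro hd x hx
      have hqk : k + 1 - (d+1) ≤ k := by omega
      set q := k + 1 - (d + 1) with hq
      have hq1 : p < q := by omega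
      have hqsucc : q + 1 = k + 1 - d := by omega
      have ihq : ∀ y, a (q + 1) < y → w y = y := by
        rw [hqsucc]; exact ih (by omega)
      rcases Nat.lt_or_ge (a (q+1)) x with hcase | hcase
      · exact ihq x hcase
      -- x in the block (a q, a (q+1)]
      have hstart : w (a q + 1) = a q + 1 := hpmax q hq1 hqk
      have hbnd : ∀ y, y ≤ a (q+1) → w y ≤ a (q+1) := by
        intro y hy
        by_contra hcon
        have h1 : w (w y) = w y := ihq (w y) (by omega)
        have h2 := w.injective h1
        omega
      have hbinc : ∀ y, a q + 1 ≤ y → y < a (q+1) → w y < w (y+1) := by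
        intro y hy1 hy2
        have hq1n : a (q+1) ≤ n := by
          rcases Nat.lt_or_ge (q+1) (k+1) with hh | hh
          · have := ha_mono (k+1) (by omega) (q+1) hh
            omega
          · have : q + 1 = k + 1 := by omega
            rw [this, hak]

        apply hwinc y (by omega) (by omega)
        intro j hj1 hj2 hj3
        rcases Nat.lt_or_ge j (q+1) with hh | hh
        · have : a j ≤ a q := by
            rcases Nat.lt_or_ge j q with h3 | h3
            · exact le_of_lt (ha_mono q (by omega) j h3)
            · have : j = q := by omega
              rw [this]
          omega
        · have : a (q+1) ≤ a j := by
            rcases Nat.lt_or_ge (q+1) j with h3 | h3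
            · exact le_of_lt (ha_mono j (by omega) (q+1) h3)
            · have : q + 1 = j := by omega
              rw [this]
          omega
      have hlow : ∀ t, a q + 1 ≤ t → t ≤ a (q+1) → t ≤ w t := by
        intro t
        induction t with
        | zero => omega
        | succ t iht =>
          intro ht1 ht2
          rcases Nat.lt_or_ge (a q + 1) (t+1) with hh | hh
          · have h5 := hbinc t (by omega) (by omega)
            have h6 := iht (by omega) (by omega)
            omega
          · have : t + 1 = a q + 1 := by omega
            rw [this, hstart]
      have hdown : ∀ s, ∀ t, t = a (q+1) - s → a q + 1 ≤ t → w t = t := by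
        intro s
        induction s with
        | zero =>
          intro t ht1 ht2
          have h5 : t = a (q+1) := by
            have := ha_mono (q+1) (by omega) q (by omega)
            omega
          have h6 := hbnd t (by omega)
          have h7 := hlow t ht2 (by omega)
          omega
        | succ s ihs =>
          intro t ht1 ht2
          rcases Nat.lt_or_ge t (a (q+1)) with hh | hh
          · have h5 : t + 1 = a (q+1) - s := by omega
            have h6 := ihs (t+1) h5 (by omega)
            have h7 := hbinc t ht2 hh
            have h8 := hlow t ht2 (by omega)
            omega
          · have h5 : t = a (q+1) := by
              have h9 := ha_mono (q+1) (by omega) q (by omega)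
              omega
            have h6 := hbnd t (by omega)
            have h7 := hlow t ht2 (by omega)
            omega
      exact hdown (a (q+1) - x) x (by omega) (by omega)
  have hup : ∀ x, a (p+1) < x → w x = x := by
    intro x hx
    have h1 : p + 1 = k + 1 - (k - p) := by omega
    exact hId (k - p) (by omega) x (by rw [← h1]; exact hx)
  -- block p analysis
  have hpk1 : a (p+1) ≤ n := by
    rcases Nat.lt_or_ge (p+1) (k+1) with hh | hh
    · have := ha_mono (k+1) (by omega) (p+1) hh
      omega
    · have : p + 1 = k + 1 := by omega
      rw [this, hak]
  have hmp1 : m + 1 ≤ a (p+1) := by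
    have := hamono p (by omega)
    omega
  have hbnd_p : ∀ y, y ≤ a (p+1) → w y ≤ a (p+1) := by
    intro y hy
    by_contra hcon
    have h1 : w (w y) = w y := hup (w y) (by omega)
    have h2 := w.injective h1
    omega
  have hbinc_p : ∀ y, m + 1 ≤ y → y < a (p+1) → w y < w (y+1) := by
    intro y hy1 hy2
    apply hwinc y (by omega) (by omega)
    intro j hj1 hj2 hj3
    rcases Nat.lt_or_ge j (p+1) with hh | hh
    · have : a j ≤ a p := by
        rcases Nat.lt_or_ge j p with h3 | h3
        · exact le_of_lt (ha_mono p (by omega) j h3)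
        · have : j = p := by omega
          rw [this]
      omega
    · have : a (p+1) ≤ a j := by
        rcases Nat.lt_or_ge (p+1) j with h3 | h3
        · exact le_of_lt (ha_mono j (by omega) (p+1) h3)
        · have : p + 1 = j := by omega
          rw [this]
      omega
  have hle : ∀ s, ∀ t, t = a (p+1) - s → m + 1 ≤ t → w t ≤ t := by
    intro s
    induction s with
    | zero =>
      intro t ht1 ht2
      have h5 : t = a (p+1) := by omega
      have h6 := hbnd_p t (by omega)
      omega
    | succ s ihs =>
      intro t ht1 ht2
      rcases Nat.lt_or_ge t (a (p+1)) with hh | hh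
      · have h5 : t + 1 = a (p+1) - s := by omega
        have h6 := ihs (t+1) h5 (by omega)
        have h7 := hbinc_p t ht2 hh
        omega
      · have h5 : t = a (p+1) := by omega
        have h6 := hbnd_p t (by omega)
        omega
  have hrm : r ≤ m := by
    have h1 : w (m+1) ≤ m + 1 := hle (a (p+1) - (m+1)) (m+1) (by omega) (by omega)
    have h2 : w (m+1) ≠ m + 1 := hpne
    omega
  -- w is strictly increasing on [m+1, n+1]
  have hwinc_tail : ∀ i, m + 1 ≤ i → i ≤ n → w i < w (i + 1) := by
    intro i h1 h2
    rcases Nat.lt_or_ge i (a (p+1)) with hh | hh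
    · exact hbinc_p i h1 hh
    · have h3 : w (i+1) = i + 1 := hup (i+1) (by omega)
      have h4 : w i ≤ i := by
        rcases Nat.lt_or_ge (a (p+1)) i with h5 | h5
        · rw [hup i h5]
        · have : i = a (p+1) := by omega
          exact hle 0 i (by omega) h1
      omega
  have hwmono : ∀ i j, m + 1 ≤ i → i < j → j ≤ n + 1 → w i < w j := by
    intro i j hi hij hj
    induction j with
    | zero => omega
    | succ j ihj =>
      rcases Nat.lt_or_ge i j with hh | hh
      · exact lt_trans (ihj (by omega) (by omega)) (hwinc_tail j (by omega) (by omega))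
      · have : i = j := by omega
        subst this
        exact hwinc_tail i hi (by omega)
  have hwgtr : ∀ i, m + 2 ≤ i → i ≤ n + 1 → r < w i := by
    intro i h1 h2
    exact hwmono (m+1) i (by omega) (by omega) h2
  -- u facts
  have hum : ∀ i, m + 1 ≤ i → u i = w (i+1) - 1 := by
    intro i h1
    rw [hu i, if_neg (by omega)]
  have hufront : ∀ x, x ≤ m → u x = if w x < r then w x else w x - 1 := by
    intro x hx
    rw [hu x, if_pos hx]
  have huw1 : ∀ i, m + 1 ≤ i → u i + 1 = w (i+1) := by
    intro i h1
    have := hwpos (i+1) (by omega)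
    rw [hum i h1]
    omega
  have hu_inc : ∀ i j, m + 1 ≤ i → i < j → j ≤ n → u i < u j := by
    intro i j h1 h2 h3
    have h4 := hwmono (i+1) (j+1) (by omega) (by omega) (by omega)
    have h5 := hwpos (i+1) (by omega)
    rw [hum i h1, hum j (by omega)]
    omega
  have hur : ∀ i, m + 1 ≤ i → i ≤ n → r ≤ u i := by
    intro i h1 h2
    have h3 := hwgtr (i+1) (by omega) (by omega)
    rw [hum i h1]
    omega
  have hwner : ∀ x, x ≤ m → w x ≠ r := by
    intro x hx heq
    have := w.injective (heq.trans hr)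
    omega
  have hwm : ∀ x, 1 ≤ x → x ≤ m → (w x < r ∧ u x = w x) ∨ (r < w x ∧ u x = w x - 1) := by
    intro x h1 h2
    have h3 := hwner x h2
    rcases Nat.lt_or_ge (w x) r with hh | hh
    · left
      refine ⟨hh, ?_⟩
      rw [hufront x h2, if_pos hh]
    · right
      refine ⟨by omega, ?_⟩
      rw [hufront x h2, if_neg (by omega)]
  -- ## chain machinery
  have hPt : ∀ t, 1 ≤ t →
      partialProd u b c t = partialProd u b c (t-1) * Equiv.swap (b t) (c t) := by
    intro t ht
    obtain ⟨t', rfl⟩ : ∃ t', t = t' + 1 := ⟨t - 1, by omega⟩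
    rw [Nat.add_sub_cancel]
    rfl
  have hstep : ∀ t, 1 ≤ t → t ≤ l →
      partialProd u b c (t-1) (b t) < partialProd u b c (t-1) (c t) ∧
      (∀ y, b t < y → y < c t →
        ¬(partialProd u b c (t-1) (b t) < partialProd u b c (t-1) y ∧
          partialProd u b c (t-1) y < partialProd u b c (t-1) (c t))) := by
    intro t ht1 ht2
    obtain ⟨hb1, hb2, hc1, hc2⟩ := hbc0 t ht1 ht2
    have hprev : invLen n (partialProd u b c (t-1)) = invLen n u + (t-1) := by
      rcases Nat.lt_or_ge (t-1) 1 with hh | hh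
      · have : t - 1 = 0 := by omega
        rw [this]
        rfl
      · exact hlen (t-1) hh (by omega)
    have hcur : invLen n (partialProd u b c t) = invLen n u + t := hlen t ht1 ht2
    have hinv : invLen n (partialProd u b c (t-1) * Equiv.swap (b t) (c t))
        = invLen n (partialProd u b c (t-1)) + 1 := by
      rw [← hPt t ht1, hcur, hprev]
      omega
    exact step_facts (partialProd u b c (t-1)) hb1 (by omega) hc2 hinv
  have hInv : ∀ j, j ≤ l →
      ((∀ i, ¬(1 ≤ i ∧ i ≤ n) → partialProd u b c j i = i) ∧
       (∀ x, 1 ≤ x → x ≤ m → (∀ t, 1 ≤ t → t ≤ j → b t ≠ x) →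
          partialProd u b c j x = u x) ∧
       (∀ i i', m+1 ≤ i → i < i' → i' ≤ n →
          partialProd u b c j i < partialProd u b c j i') ∧
       (∀ i, m+2 ≤ i → i ≤ n → u (i-1) < partialProd u b c j i) ∧
       (∀ i, m+1 ≤ i → i ≤ n → partialProd u b c j i ≤ u i) ∧
       (∀ x, 1 ≤ x → x ≤ m → (∀ t, 1 ≤ t → t ≤ j → b t ≠ x) →
         ∀ i, m+1 ≤ i → i ≤ n → partialProd u b c j i < u x → u x ≤ u i →
         ∃ y, x < y ∧ y ≤ m ∧ (∃ t, 1 ≤ t ∧ t ≤ j ∧ b t = y) ∧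
           u x < partialProd u b c j y ∧ partialProd u b c j y ≤ u i)) := by
    intro j
    induction j with
    | zero =>
      intro _
      -- partialProd u b c 0 = u definitionally
      refine ⟨hufix, fun x _ _ _ => rfl, fun i i' h1 h2 h3 => hu_inc i i' h1 h2 h3,
        fun i h1 h2 => hu_inc (i-1) i (by omega) (by omega) h2,
        fun i _ _ => le_refl _, ?_⟩
      intro x hx1 hx2 _ i hi1 hi2 hlt hle'
      exfalso
      have : (partialProd u b c 0) i = u i := rfl
      omega
    | succ j ih =>
      intro hj1
      obtain ⟨Fix, FR, INC, SLO, SUP, K⟩ := ih (by omega)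
      obtain ⟨hB1, hB2, hC1, hC2⟩ := hbc0 (j+1) (by omega) hj1
      have hst := hstep (j+1) (by omega) hj1
      rw [Nat.add_sub_cancel] at hst
      obtain ⟨hasc, hnomid⟩ := hst
      have hPj : partialProd u b c (j+1)
          = partialProd u b c j * Equiv.swap (b (j+1)) (c (j+1)) := rfl
      have hEvB : partialProd u b c (j+1) (b (j+1)) = partialProd u b c j (c (j+1)) := by
        rw [hPj]; exact swap_eval_b _ _ _
      have hEvC : partialProd u b c (j+1) (c (j+1)) = partialProd u b c j (b (j+1)) := by
        rw [hPj]; exact swap_eval_c _ _ _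
      have hEv : ∀ z, z ≠ b (j+1) → z ≠ c (j+1) →
          partialProd u b c (j+1) z = partialProd u b c j z := by
        intro z h1 h2
        rw [hPj]; exact swap_eval _ _ _ z h1 h2
      have hBfr : partialProd u b c j (b (j+1)) = u (b (j+1)) := by
        apply FR (b (j+1)) hB1 hB2
        intro t ht1 ht2
        exact hdist t (j+1) ht1 (by omega) hj1
      have htail_lt : ∀ z, m+1 ≤ z → z < c (j+1) →
          partialProd u b c j z < partialProd u b c j (b (j+1)) := by
        intro z h1 h2
        have h3 : partialProd u b c j z < partialProd u b c j (c (j+1)) :=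
          INC z (c (j+1)) h1 h2 hC2
        have h4 : partialProd u b c j z ≠ partialProd u b c j (b (j+1)) := by
          intro heq
          have := (partialProd u b c j).injective heq
          omega
        have h5 := hnomid z (by omega) h2
        omega
      have hCnew : m + 2 ≤ c (j+1) → u (c (j+1) - 1) < u (b (j+1)) := by
        intro hC3
        by_contra hcon
        have hble : u (b (j+1)) ≤ u (c (j+1) - 1) := by omega
        have hne : partialProd u b c j (c (j+1) - 1) ≠ u (b (j+1)) := by
          rw [← hBfr]
          intro heq
          have := (partialProd u b c j).injective heq
          omega
        rcases Nat.lt_or_ge (partialProd u b c j (c (j+1) - 1)) (u (b (j+1))) with hh | hh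
        · obtain ⟨y, hy1, hy2, _, hy4, hy5⟩ :=
            K (b (j+1)) hB1 hB2
              (fun t ht1 ht2 => hdist t (j+1) ht1 (by omega) hj1)
              (c (j+1) - 1) (by omega) (by omega) hh hble
          have h6 : u (c (j+1) - 1) < partialProd u b c j (c (j+1)) :=
            SLO (c (j+1)) hC3 hC2
          have h7 := hnomid y (by omega) (by omega)
          rw [hBfr] at h7
          omega
        · have := htail_lt (c (j+1) - 1) (by omega) (by omega)
          rw [hBfr] at this
          omega
      refine ⟨?_, ?_, ?_, ?_, ?_, ?_⟩
      · -- Fix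
        intro i hi
        rw [hEv i (by omega) (by omega)]
        exact Fix i hi
      · -- FR
        intro x h1 h2 h3
        rw [hEv x (fun heq => h3 (j+1) (by omega) (by omega) heq.symm) (by omega)]
        exact FR x h1 h2 (fun t ht1 ht2 => h3 t ht1 (by omega))
      · -- INC
        intro i i' h1 h2 h3
        by_cases hiC : i = c (j+1)
        · rw [hiC, hEvC, hEv i' (by omega) (by omega)]
          have h4 : partialProd u b c j (c (j+1)) < partialProd u b c j i' :=
            INC (c (j+1)) i' (by omega) (by omega) h3
          omega
        · by_cases hiC' : i' = c (j+1)
          · rw [hiC', hEvC, hEv i (by omega) hiC]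
            exact htail_lt i h1 (by omega)
          · rw [hEv i (by omega) hiC, hEv i' (by omega) hiC']
            exact INC i i' h1 h2 h3
      · -- SLO
        intro i h1 h2
        by_cases hiC : i = c (j+1)
        · rw [hiC, hEvC, hBfr]
          exact hCnew (by omega)
        · rw [hEv i (by omega) hiC]
          exact SLO i h1 h2
      · -- SUP
        intro i h1 h2
        by_cases hiC : i = c (j+1)
        · rw [hiC, hEvC, hBfr]
          have h3 : partialProd u b c j (c (j+1)) ≤ u (c (j+1)) :=
            SUP (c (j+1)) (by omega) (by omega)
          have h4 := hasc
          rw [hBfr] at h4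
          omega
        · rw [hEv i (by omega) hiC]
          exact SUP i h1 h2
      · -- K
        intro x h1 h2 h3 i h4 h5 h6 h7
        have hxB : x ≠ b (j+1) := fun heq => h3 (j+1) (by omega) (by omega) heq.symm
        have hxfr : partialProd u b c j x = u x :=
          FR x h1 h2 (fun t ht1 ht2 => h3 t ht1 (by omega))
        have hmain : ∀ y, x < y → y ≤ m → (∃ t, 1 ≤ t ∧ t ≤ j ∧ b t = y) →
            u x < partialProd u b c j y → partialProd u b c j y ≤ u i →
            ∃ y', x < y' ∧ y' ≤ m ∧ (∃ t, 1 ≤ t ∧ t ≤ j + 1 ∧ b t = y') ∧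
              u x < partialProd u b c (j+1) y' ∧ partialProd u b c (j+1) y' ≤ u i := by
          rintro y hy1 hy2 ⟨t, ht1, ht2, ht3⟩ hy4 hy5
          have hyB : y ≠ b (j+1) := by
            intro heq
            exact hdist t (j+1) ht1 (by omega) hj1 (by rw [ht3, heq])
          have hyC : y ≠ c (j+1) := by omega
          exact ⟨y, hy1, hy2, ⟨t, ht1, by omega, ht3⟩, by rw [hEv y hyB hyC]; exact hy4,
            by rw [hEv y hyB hyC]; exact hy5⟩
        by_cases hiC : i = c (j+1)
        · have h6' : u (b (j+1)) < u x := by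
            rw [← hBfr, ← hEvC, ← hiC]
            exact h6
          rcases Nat.lt_or_ge (partialProd u b c j i) (u x) with hh | hh
          · obtain ⟨y, hy1, hy2, hy3, hy4, hy5⟩ :=
              K x h1 h2 (fun t ht1 ht2 => h3 t ht1 (by omega)) i h4 h5 hh h7
            exact hmain y hy1 hy2 hy3 hy4 hy5
          · have hne : partialProd u b c j i ≠ u x := by
              rw [← hxfr]
              intro heq
              have := (partialProd u b c j).injective heq
              omega
            have hgt : u x < partialProd u b c j i := by omega
            rcases Nat.lt_or_ge x (b (j+1)) with hxb | hxb
            · refine ⟨b (j+1), hxb, hB2, ⟨j+1, by omega, le_refl _, rfl⟩, ?_, ?_⟩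
              · rw [hEvB, ← hiC]; exact hgt
              · rw [hEvB, ← hiC]; exact SUP i h4 h5
            · exfalso
              have h8 := hnomid x (by omega) (by omega)
              rw [hBfr, hxfr, ← hiC] at h8
              omega
        · rw [hEv i (by omega) hiC] at h6
          obtain ⟨y, hy1, hy2, hy3, hy4, hy5⟩ :=
            K x h1 h2 (fun t ht1 ht2 => h3 t ht1 (by omega)) i h4 h5 h6 h7
          exact hmain y hy1 hy2 hy3 hy4 hy5
  -- ## sums
  have hIcc_ins : Finset.Icc (m+1) n = insert (m+1) (Finset.Icc (m+2) n) := by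
    ext x
    simp only [Finset.mem_Icc, Finset.mem_insert]
    omega
  have htel : ∀ N, m + 1 ≤ N → ∑ i ∈ Finset.Icc (m+1) N, ((w (i+1) : ℤ) - w i)
      = (w (N+1) : ℤ) - w (m+1) := by
    intro N hN
    induction N, hN using Nat.le_induction with
    | base => rw [Finset.Icc_self, Finset.sum_singleton]
    | succ N hN ihN =>
      rw [Finset.sum_Icc_succ_top (by omega), ihN]
      ring
  have part2 : ∑ i ∈ Finset.Icc (m+1) n, ((u i : ℤ) - w i) = (m : ℤ) + 1 - r := by
    have h1 : ∀ i ∈ Finset.Icc (m+1) n, ((u i : ℤ) - w i)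
        = (((w (i+1) : ℤ) - w i) - 1) := by
      intro i hi
      rw [Finset.mem_Icc] at hi
      have h2 := huw1 i hi.1
      have h3 : (u i : ℤ) + 1 = w (i+1) := by exact_mod_cast h2
      omega
    rw [Finset.sum_congr rfl h1, Finset.sum_sub_distrib, htel n (by omega),
      Finset.sum_const, Nat.card_Icc, hwbig (n+1) (by omega)]
    simp only [nsmul_eq_mul, mul_one]
    have h4 : ((n + 1 - (m+1) : ℕ) : ℤ) = (n : ℤ) - m := by omega
    rw [h4, ← hr]
    push_cast
    ring
  have hsum : ∀ j, j ≤ l →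
      ∑ i ∈ Finset.Icc (m+1) n, ((u i : ℤ) - partialProd u b c j i)
      = ∑ t ∈ Finset.Icc 1 j, ((partialProd u b c (t-1) (c t) : ℤ)
          - partialProd u b c (t-1) (b t)) := by
    intro j
    induction j with
    | zero =>
      intro _
      have h1 : ∀ i ∈ Finset.Icc (m+1) n, ((u i : ℤ) - partialProd u b c 0 i) = 0 := by
        intro i _
        have : partialProd u b c 0 i = u i := rfl
        rw [this]
        ring
      rw [Finset.sum_congr rfl h1, Finset.sum_const_zero]
      rw [Finset.Icc_eq_empty (by omega), Finset.sum_empty]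
    | succ j ih =>
      intro hj1
      have hih := ih (by omega)
      obtain ⟨hB1, hB2, hC1, hC2⟩ := hbc0 (j+1) (by omega) hj1
      have hPj : partialProd u b c (j+1)
          = partialProd u b c j * Equiv.swap (b (j+1)) (c (j+1)) := rfl
      have hdiff : ∑ i ∈ Finset.Icc (m+1) n,
          ((partialProd u b c j i : ℤ) - partialProd u b c (j+1) i)
          = (partialProd u b c j (c (j+1)) : ℤ) - partialProd u b c j (b (j+1)) := by
        rw [Finset.sum_eq_single_of_mem (c (j+1)) (by rw [Finset.mem_Icc]; omega)]
        · rw [hPj, swap_eval_c]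
        · intro i hi hne
          rw [Finset.mem_Icc] at hi
          have : partialProd u b c (j+1) i = partialProd u b c j i := by
            rw [hPj]
            exact swap_eval _ _ _ i (by omega) hne
          rw [this]
          ring
      have hsplit : ∑ i ∈ Finset.Icc (m+1) n, ((u i : ℤ) - partialProd u b c (j+1) i)
          = (∑ i ∈ Finset.Icc (m+1) n, ((u i : ℤ) - partialProd u b c j i))
            + ∑ i ∈ Finset.Icc (m+1) n,
              ((partialProd u b c j i : ℤ) - partialProd u b c (j+1) i) := by
        rw [← Finset.sum_add_distrib]
        apply Finset.sum_congr rfl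
        intro i _
        ring
      rw [hsplit, hdiff, hih, Finset.sum_Icc_succ_top (by omega : 1 ≤ j + 1),
        Nat.add_sub_cancel]
  have hjump : ∀ t, 1 ≤ t → t ≤ l →
      (1 : ℤ) ≤ (partialProd u b c (t-1) (c t) : ℤ) - partialProd u b c (t-1) (b t) := by
    intro t h1 h2
    have := (hstep t h1 h2).1
    omega
  have hlcard : (Finset.Icc 1 l).card = l := by
    rw [Nat.card_Icc]
    omega
  have hSl : (l : ℤ) ≤ ∑ t ∈ Finset.Icc 1 l, ((partialProd u b c (t-1) (c t) : ℤ)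
      - partialProd u b c (t-1) (b t)) := by
    calc (l : ℤ) = ∑ _t ∈ Finset.Icc 1 l, (1 : ℤ) := by
          rw [Finset.sum_const, hlcard, nsmul_eq_mul, mul_one]
    _ ≤ _ := by
          apply Finset.sum_le_sum
          intro t ht
          rw [Finset.mem_Icc] at ht
          exact hjump t ht.1 ht.2
  have hlz : (l : ℤ) = (m : ℤ) + 1 - r := by
    rw [hl]
    omega
  have hvsum : ∑ i ∈ Finset.Icc (m+1) n, ((u i : ℤ) - v i)
      = ∑ t ∈ Finset.Icc 1 l, ((partialProd u b c (t-1) (c t) : ℤ)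
          - partialProd u b c (t-1) (b t)) := by
    rw [hvP]
    exact hsum l (le_refl l)
  have part1 : ((m : ℤ) + 1 - r) ≤ ∑ i ∈ Finset.Icc (m+1) n, ((u i : ℤ) - v i) := by
    rw [hvsum]
    omega
  -- ## part 3
  set S : ℤ := ∑ t ∈ Finset.Icc 1 l, ((partialProd u b c (t-1) (c t) : ℤ)
      - partialProd u b c (t-1) (b t)) with hSdef
  have hInvl := hInv l (le_refl l)
  obtain ⟨vFix, vFR, vINC, vSLO, vSUP, _⟩ := hInvl
  have hvtail : ∀ i, m+2 ≤ i → i ≤ n → w i ≤ v i := by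
    intro i h1 h2
    have h3 : u (i-1) < v i := by rw [hvP]; exact vSLO i h1 h2
    have h4 : u (i-1) + 1 = w i := by
      have h5 := huw1 (i-1) (by omega)
      have h6 : i - 1 + 1 = i := by omega
      rw [h6] at h5
      exact h5
    omega
  have hsplit3 : ∑ i ∈ Finset.Icc (m+1) n, ((v i : ℤ) - w i)
      = ((v (m+1) : ℤ) - r) + ∑ i ∈ Finset.Icc (m+2) n, ((v i : ℤ) - w i) := by
    rw [hIcc_ins, Finset.sum_insert (by simp [Finset.mem_Icc]), ← hr]
  have hdiff3 : ∑ i ∈ Finset.Icc (m+1) n, ((v i : ℤ) - w i)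
      = (∑ i ∈ Finset.Icc (m+1) n, ((u i : ℤ) - w i))
        - ∑ i ∈ Finset.Icc (m+1) n, ((u i : ℤ) - v i) := by
    rw [← Finset.sum_sub_distrib]
    apply Finset.sum_congr rfl
    intro i _
    ring
  have htail_nonneg : (0 : ℤ) ≤ ∑ i ∈ Finset.Icc (m+2) n, ((v i : ℤ) - w i) := by
    apply Finset.sum_nonneg
    intro i hi
    rw [Finset.mem_Icc] at hi
    have := hvtail i hi.1 hi.2
    omega
  have hkey3 : ((v (m+1) : ℤ) - r) + ∑ i ∈ Finset.Icc (m+2) n, ((v i : ℤ) - w i)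
      = ((m:ℤ)+1-r) - S := by
    rw [← hsplit3, hdiff3, part2, hvsum]
  have part3 : v (m+1) ≤ r := by omega
  -- ## part 4
  have part4 : v (m+1) = r → v = w := by
    intro hveq
    have hveqz : ((v (m+1) : ℤ) - r) = 0 := by omega
    have hSeq : S = (l : ℤ) := by omega
    have htail0 : ∑ i ∈ Finset.Icc (m+2) n, ((v i : ℤ) - w i) = 0 := by omega
    have htaileq : ∀ i, m + 2 ≤ i → i ≤ n → v i = w i := by
      intro i h1 h2
      have h3 := (Finset.sum_eq_zero_iff_of_nonneg (fun i hi => by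
        rw [Finset.mem_Icc] at hi
        have := hvtail i hi.1 hi.2
        omega)).mp htail0 i (by rw [Finset.mem_Icc]; omega)
      omega
    have hjone : ∀ t, 1 ≤ t → t ≤ l →
        partialProd u b c (t-1) (c t) = partialProd u b c (t-1) (b t) + 1 := by
      intro t h1 h2
      have hz : ∑ t ∈ Finset.Icc 1 l, (((partialProd u b c (t-1) (c t) : ℤ)
          - partialProd u b c (t-1) (b t)) - 1) = 0 := by
        rw [Finset.sum_sub_distrib, ← hSdef, Finset.sum_const, hlcard, nsmul_eq_mul,
          mul_one, hSeq]
        ring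
      have h3 := (Finset.sum_eq_zero_iff_of_nonneg (fun t ht => by
        rw [Finset.mem_Icc] at ht
        have := hjump t ht.1 ht.2
        omega)).mp hz t (by rw [Finset.mem_Icc]; omega)
      omega
    have hfrozen : ∀ t, 1 ≤ t → t ≤ l → ∀ s, t ≤ s → s ≤ l →
        partialProd u b c s (b t) = partialProd u b c t (b t) := by
      intro t h1 h2 s hs1
      induction s, hs1 using Nat.le_induction with
      | base => intro _; rfl
      | succ s hs ihs =>
        intro hs2
        have hbs : b t ≠ b (s+1) := hdist t (s+1) h1 (by omega) (by omega)
        have hcs : b t ≠ c (s+1) := by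
          obtain ⟨x1, x2, x3, x4⟩ := hbc0 t h1 h2
          obtain ⟨y1, y2, y3, y4⟩ := hbc0 (s+1) (by omega) (by omega)
          omega
        have he : partialProd u b c (s+1) (b t) = partialProd u b c s (b t) := by
          have : partialProd u b c (s+1)
              = partialProd u b c s * Equiv.swap (b (s+1)) (c (s+1)) := rfl
          rw [this]
          exact swap_eval _ _ _ _ hbs hcs
        rw [he, ihs (by omega)]
    have hvB : ∀ t, 1 ≤ t → t ≤ l → v (b t) = u (b t) + 1 := by
      intro t h1 h2
      have e1 : v (b t) = partialProd u b c t (b t) := by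
        rw [hvP]
        exact hfrozen t h1 h2 l h2 (le_refl l)
      have e2 : partialProd u b c t (b t) = partialProd u b c (t-1) (c t) := by
        rw [hPt t h1]
        exact swap_eval_b _ _ _
      have e3 := hjone t h1 h2
      have e4 : partialProd u b c (t-1) (b t) = u (b t) := by
        obtain ⟨_, FR', _, _, _, _⟩ := hInv (t-1) (by omega)
        obtain ⟨x1, x2, x3, x4⟩ := hbc0 t h1 h2
        exact FR' (b t) x1 x2 (fun t' ht1 ht2 => hdist t' t ht1 (by omega) h2)
      rw [e1, e2, e3, e4]
    have hvNB : ∀ x, 1 ≤ x → x ≤ m → (∀ t, 1 ≤ t → t ≤ l → b t ≠ x) → v x = u x := by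
      intro x h1 h2 h3
      rw [hvP]
      exact vFR x h1 h2 h3
    -- B and C sets
    set Bset := (Finset.Icc 1 l).image b with hBdef
    have hmemB : ∀ x, x ∈ Bset ↔ ∃ t, 1 ≤ t ∧ t ≤ l ∧ b t = x := by
      intro x
      rw [hBdef, Finset.mem_image]
      constructor
      · rintro ⟨t, ht, rfl⟩
        rw [Finset.mem_Icc] at ht
        exact ⟨t, ht.1, ht.2, rfl⟩
      · rintro ⟨t, h1, h2, rfl⟩
        exact ⟨t, by rw [Finset.mem_Icc]; omega, rfl⟩
    have hBm : ∀ x ∈ Bset, 1 ≤ x ∧ x ≤ m := by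
      intro x hx
      obtain ⟨t, h1, h2, rfl⟩ := (hmemB x).mp hx
      obtain ⟨x1, x2, _, _⟩ := hbc0 t h1 h2
      exact ⟨x1, x2⟩
    have hvB' : ∀ x ∈ Bset, v x = u x + 1 := by
      intro x hx
      obtain ⟨t, h1, h2, rfl⟩ := (hmemB x).mp hx
      exact hvB t h1 h2
    have hBcard : Bset.card = l := by
      rw [hBdef, Finset.card_image_of_injOn, hlcard]
      intro t ht t' ht' heq
      rw [Finset.mem_coe, Finset.mem_Icc] at ht ht'
      by_contra hne
      rcases Nat.lt_or_ge t t' with hh | hh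
      · exact hdist t t' ht.1 hh ht'.2 heq
      · exact hdist t' t ht'.1 (by omega) ht.2 heq.symm
    have hchase : ∀ d, ∀ x, x ∈ Bset → w x < r → r - w x ≤ d → False := by
      intro d
      induction d with
      | zero => intro x _ h1 h2; omega
      | succ d ihd =>
        intro x hx hwx hd
        obtain ⟨hx1, hxm⟩ := hBm x hx
        have hux : u x = w x := by
          rcases hwm x hx1 hxm with ⟨_, h⟩ | ⟨h, _⟩
          · assumption
          · omega
        have hvx : v x = w x + 1 := by rw [hvB' x hx, hux]
        have hvxr : v x ≠ r := by
          intro heq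
          have h5 : v x = v (m+1) := by rw [heq, hveq]
          have := v.injective h5
          omega
        have hvlt : w x + 1 < r := by omega
        obtain ⟨y, hwy⟩ : ∃ y, w y = w x + 1 := ⟨w.symm _, w.apply_symm_apply _⟩
        have hy0 : 1 ≤ y := by
          rcases Nat.eq_zero_or_pos y with hh | hh
          · rw [hh, hw0] at hwy; omega
          · omega
        have hrn : r ≤ n := (hwrange (m+1) (by omega) (by omega)).2
        have hyn : y ≤ n := by
          by_contra hcon
          have := hwbig y (by omega)
          omega
        have hym : y ≤ m := by
          rcases Nat.lt_or_ge m y with hh | hh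
          · exfalso
            rcases Nat.lt_or_ge (m+1) y with hh2 | hh2
            · have := hwgtr y (by omega) (by omega)
              omega
            · have h6 : y = m + 1 := by omega
              rw [h6, ← hr] at hwy
              omega
          · omega
        have hyB : y ∈ Bset := by
          by_contra hyB
          have hnb : ∀ t, 1 ≤ t → t ≤ l → b t ≠ y := by
            intro t h1 h2 heq
            exact hyB ((hmemB y).mpr ⟨t, h1, h2, heq⟩)
          have hvy : v y = u y := hvNB y hy0 hym hnb
          have huy : u y = w y := by
            rcases hwm y hy0 hym with ⟨_, h⟩ | ⟨h, _⟩
            · assumption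
            · omega
          have h7 : v y = v x := by rw [hvy, huy, hwy, hvx]
          have hyx := v.injective h7
          rw [hyx] at hwy
          omega
        exact ihd y hyB (by omega) (by omega)
    have hBC : ∀ x ∈ Bset, r < w x := by
      intro x hx
      obtain ⟨hx1, hxm⟩ := hBm x hx
      rcases hwm x hx1 hxm with ⟨h, _⟩ | ⟨h, _⟩
      · exact (hchase r x hx h (by omega)).elim
      · exact h
    set Cset := (Finset.Icc 1 m).filter (fun x => r < w x) with hCdef
    have hBsubC : Bset ⊆ Cset := by
      intro x hx
      obtain ⟨hx1, hxm⟩ := hBm x hx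
      rw [hCdef, Finset.mem_filter, Finset.mem_Icc]
      exact ⟨⟨hx1, hxm⟩, hBC x hx⟩
    have hC'card : ((Finset.Icc 1 m).filter (fun x => w x < r)).card = r - 1 := by
      have := Finset.card_bij (s := (Finset.Icc 1 m).filter (fun x => w x < r))
        (t := Finset.Icc 1 (r-1)) (fun x _ => w x)
        (fun x hx => by
          rw [Finset.mem_filter, Finset.mem_Icc] at hx
          rw [Finset.mem_Icc]
          obtain ⟨⟨a1, a2⟩, a3⟩ := hx
          have a4 : w x < r := a3
          exact ⟨hwpos x a1, Nat.le_pred_of_lt a4⟩)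
        (fun x hx x' hx' heq => w.injective heq)
        (fun z hz => by
          rw [Finset.mem_Icc] at hz
          refine ⟨w.symm z, ?_, w.apply_symm_apply _⟩
          have hwz : w (w.symm z) = z := w.apply_symm_apply _
          have hz0 : 1 ≤ w.symm z := by
            rcases Nat.eq_zero_or_pos (w.symm z) with hh | hh
            · rw [hh, hw0] at hwz; omega
            · omega
          have hrn : r ≤ n := (hwrange (m+1) (by omega) (by omega)).2
          have hzn : w.symm z ≤ n := by
            by_contra hcon
            have := hwbig (w.symm z) (by omega)
            omega
          have hzm : w.symm z ≤ m := by
            rcases Nat.lt_or_ge m (w.symm z) with hh | hh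
            · exfalso
              rcases Nat.lt_or_ge (m+1) (w.symm z) with hh2 | hh2
              · have := hwgtr (w.symm z) (by omega) (by omega)
                omega
              · have h6 : w.symm z = m + 1 := by omega
                rw [h6, ← hr] at hwz
                omega
            · omega
          rw [Finset.mem_filter, Finset.mem_Icc, hwz]
          exact ⟨⟨hz0, hzm⟩, lt_of_le_of_lt hz.2 (Nat.sub_lt hr1 one_pos)⟩)
      rw [this, Nat.card_Icc]
      omega
    have hCcard : Cset.card = l := by
      have hpartn := Finset.card_filter_add_card_filter_not
        (s := Finset.Icc 1 m) (p := fun x => w x < r)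
      have hcongr : (Finset.Icc 1 m).filter (fun x => ¬ w x < r) = Cset := by
        rw [hCdef]
        apply Finset.filter_congr
        intro x hx
        rw [Finset.mem_Icc] at hx
        have := hwner x hx.2
        constructor
        · intro h; omega
        · intro h; omega
      rw [hcongr, hC'card] at hpartn
      have hIm : (Finset.Icc 1 m).card = m := by rw [Nat.card_Icc]; omega
      rw [hIm] at hpartn
      omega
    have hBeq : Bset = Cset :=
      Finset.eq_of_subset_of_card_le hBsubC (by rw [hBcard, hCcard])
    -- conclude v = w
    apply Equiv.ext
    intro i
    by_cases hi0 : 1 ≤ i ∧ i ≤ n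
    · obtain ⟨hi1, hi2⟩ := hi0
      rcases Nat.lt_or_ge m i with him | him
      · rcases Nat.lt_or_ge (m+1) i with him2 | him2
        · exact htaileq i (by omega) hi2
        · have h6 : i = m + 1 := by omega
          rw [h6, hveq, hr]
      · by_cases hiB : i ∈ Bset
        · have h7 := hBC i hiB
          have h8 := hvB' i hiB
          have h9 : u i = w i - 1 := by
            rcases hwm i hi1 him with ⟨h, _⟩ | ⟨_, h⟩
            · omega
            · assumption
          have h10 := hwpos i hi1
          omega
        · have hnb : ∀ t, 1 ≤ t → t ≤ l → b t ≠ i := by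
            intro t h1 h2 heq
            exact hiB ((hmemB i).mpr ⟨t, h1, h2, heq⟩)
          have h8 := hvNB i hi1 him hnb
          have h9 : ¬ r < w i := by
            intro hcon
            apply hiB
            rw [hBeq, hCdef, Finset.mem_filter, Finset.mem_Icc]
            exact ⟨⟨hi1, him⟩, hcon⟩
          have h10 : u i = w i := by
            rcases hwm i hi1 him with ⟨_, h⟩ | ⟨h, _⟩
            · assumption
            · omega
          omega
    · have h6 : v i = i := by
        rw [hvP]
        exact vFix i hi0
      rw [h6, hwfix i hi0]
  -- ## final assembly
  refine ⟨?_, ?_, ?_, part4⟩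
  · exact part1
  · exact part2
  · exact part3
end

section
/- Let a = (a_1 < a_2 < a_3), 0 < a_i < n, and f = (f_1, f_2, f_3) : P^1 → Fl(a_1,a_2,a_3; E) a morphism of multidegree (d, d+1, d) whose image has kernel K_• of dimensions (a_1 - d, a_2 - d - 1, a_3 - d). Suppose x_1,...,x_{d+1}, y_1,...,y_{d+1} ∈ E are linearly independent with: f_1(s:t) = K_1 ⊕ span(s x_1 + t y_1, ..., s x_d + t y_d) for all (s:t); f_2(1:0) = K_2 ⊕ span(x_1,...,x_{d+1}); f_2(0:1) = K_2 ⊕ span(y_1,...,y_{d+1}); K_2 ∩ span(x_1,...,x_{d+1},y_1,...,y_{d+1}) = 0; K_3 ∩ span(x_1,...,x_d,y_1,...,y_d) = 0; and x_{d+1}, y_{d+1} ∈ K_3. Then there exists a unique λ ∈ C* such that f_2(s:t) = K_2 ⊕ span(s x_1 + t y_1, ..., s x_d + t y_d, s x_{d+1} + t λ y_{d+1}) for all (s:t). -/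
/-- `f` (viewed as a function of the homogeneous coordinates `(s : t)` of `ℙ¹`)
is a regular map `ℙ¹ → Gr(m, E)` of degree `d`: it is given by `m` vector-valued
binary forms `gᵢ(s,t) = ∑_j s^j t^{eᵢ-j} • v i j` of degrees `eᵢ` with `∑ eᵢ = d`,
whose values are linearly independent at every point of `ℙ¹` (so that the Plücker
coordinates are forms of degree `d` with no common zero). -/
def IsGrMap {E : Type*} [AddCommGroup E] [Module ℂ E]
    (m d : ℕ) (f : ℂ → ℂ → Submodule ℂ E) : Prop :=
  ∃ (e : Fin m → ℕ) (v : Fin m → ℕ → E),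
    (∑ i, e i) = d ∧
    ∀ s t : ℂ, (s, t) ≠ (0, 0) →
      LinearIndependent ℂ
        (fun i : Fin m => ∑ j ∈ Finset.range (e i + 1), (s ^ j * t ^ (e i - j)) • v i j) ∧
      f s t = Submodule.span ℂ
        (Set.range (fun i : Fin m => ∑ j ∈ Finset.range (e i + 1), (s ^ j * t ^ (e i - j)) • v i j))

open Submodule Set Module

section Helpers

variable {E : Type*} [AddCommGroup E] [Module ℂ E]

lemma aux_sup_inf_cancel {K S A : Submodule ℂ E} (hd : Disjoint K S) (hA : A ≤ S) :
    (K ⊔ A) ⊓ S = A := by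
  rw [sup_comm, sup_inf_assoc_of_le _ hA, disjoint_iff.mp hd, sup_bot_eq]

lemma aux_sup_cancel {K S A B : Submodule ℂ E} (hd : Disjoint K S) (hA : A ≤ S) (hB : B ≤ S)
    (h : K ⊔ A = K ⊔ B) : A = B := by
  rw [← aux_sup_inf_cancel hd hA, ← aux_sup_inf_cancel hd hB, h]

lemma aux_exists_compl_vec [FiniteDimensional ℂ E] {L P : Submodule ℂ E}
    (hLP : L ≤ P) (hr : finrank ℂ P ≤ finrank ℂ L + 1) :
    ∃ z, P = L ⊔ span ℂ {z} := by
  by_cases he : P = L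
  · exact ⟨0, by simp [he]⟩
  · obtain ⟨z, hzP, hzL⟩ := SetLike.exists_of_lt (lt_of_le_of_ne hLP (fun h => he h.symm))
    refine ⟨z, ?_⟩
    have hle : L ⊔ span ℂ {z} ≤ P := sup_le hLP ((span_singleton_le_iff_mem _ _).mpr hzP)
    have hzm : z ∈ L ⊔ span ℂ {z} := Submodule.mem_sup_right (mem_span_singleton_self z)
    have hlt : L < L ⊔ span ℂ {z} := lt_of_le_of_ne le_sup_left (fun hEq => hzL (hEq.symm ▸ hzm))
    have hfr := Submodule.finrank_lt_finrank_of_lt hlt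
    exact (Submodule.eq_of_le_of_finrank_le hle (hr.trans hfr)).symm

lemma aux_indep_scaled {m : ℕ} {x y : Fin m → E}
    (h : LinearIndependent ℂ (Sum.elim x y)) {s t : ℂ} (hst : ¬(s = 0 ∧ t = 0))
    (c : Fin m → ℂ) (hc : ∀ i, c i ≠ 0) :
    LinearIndependent ℂ (fun i => s • x i + (t * c i) • y i) := by
  rw [Fintype.linearIndependent_iff]
  intro a ha
  have key := Fintype.linearIndependent_iff.mp h
      (Sum.elim (fun i => a i * s) (fun i => a i * (t * c i))) ?_
  · intro i
    have k1 := key (Sum.inl i)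
    have k2 := key (Sum.inr i)
    simp only [Sum.elim_inl, Sum.elim_inr] at k1 k2
    rcases mul_eq_zero.mp k1 with h0 | h0
    · exact h0
    · rcases mul_eq_zero.mp k2 with h1 | h1
      · exact h1
      · exact absurd ⟨h0, (mul_eq_zero.mp h1).resolve_right (hc i)⟩ hst
  · rw [Fintype.sum_sum_type]
    simp only [Sum.elim_inl, Sum.elim_inr]
    simp only [smul_add, smul_smul] at ha
    rw [Finset.sum_add_distrib] at ha
    exact ha

lemma aux_sup_span_congr {K : Submodule ℂ E} {ι : Type*} {f g : ι → E}
    (h : ∀ i, f i - g i ∈ K) : K ⊔ span ℂ (range f) = K ⊔ span ℂ (range g) := by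
  apply le_antisymm
  · refine sup_le le_sup_left (span_le.mpr ?_)
    rintro _ ⟨i, rfl⟩
    have he : f i = (f i - g i) + g i := by abel
    rw [he]
    exact add_mem (mem_sup_left (h i)) (mem_sup_right (subset_span ⟨i, rfl⟩))
  · refine sup_le le_sup_left (span_le.mpr ?_)
    rintro _ ⟨i, rfl⟩
    have he : g i = -(f i - g i) + f i := by abel
    rw [he]
    exact add_mem (mem_sup_left (neg_mem (h i))) (mem_sup_right (subset_span ⟨i, rfl⟩))

end Helpers

theorem classify_middle_curve (E : Type*) [AddCommGroup E] [Module ℂ E]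
    [FiniteDimensional ℂ E]
    (n a1 a2 a3 d : ℕ) (ha1 : 0 < a1) (ha12 : a1 < a2) (ha23 : a2 < a3) (ha3n : a3 < n)
    (hn : Module.finrank ℂ E = n)
    (f1 f2 f3 : ℂ → ℂ → Submodule ℂ E)
    -- `f = (f1, f2, f3) : ℙ¹ → Fl(a1,a2,a3;E)` of multidegree `(d, d+1, d)`
    (hf1 : IsGrMap a1 d f1) (hf2 : IsGrMap a2 (d + 1) f2) (hf3 : IsGrMap a3 d f3)
    (hflag : ∀ s t : ℂ, (s, t) ≠ (0, 0) → f1 s t ≤ f2 s t ∧ f2 s t ≤ f3 s t)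
    -- the kernels of the three projected curves
    (K1 K2 K3 : Submodule ℂ E)
    (hK1 : K1 = ⨅ p : {p : ℂ × ℂ // p ≠ (0, 0)}, f1 p.1.1 p.1.2)
    (hK2 : K2 = ⨅ p : {p : ℂ × ℂ // p ≠ (0, 0)}, f2 p.1.1 p.1.2)
    (hK3 : K3 = ⨅ p : {p : ℂ × ℂ // p ≠ (0, 0)}, f3 p.1.1 p.1.2)
    (hdK1 : Module.finrank ℂ K1 = a1 - d)
    (hdK2 : Module.finrank ℂ K2 = a2 - d - 1)
    (hdK3 : Module.finrank ℂ K3 = a3 - d)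
    (x y : Fin (d + 1) → E)
    (hindep : LinearIndependent ℂ (Sum.elim x y))
    (h1 : ∀ s t : ℂ, (s, t) ≠ (0, 0) →
      f1 s t = K1 ⊔ Submodule.span ℂ
        (Set.range (fun i : Fin d => s • x i.castSucc + t • y i.castSucc)))
    (h2 : f2 1 0 = K2 ⊔ Submodule.span ℂ (Set.range x))
    (h3 : f2 0 1 = K2 ⊔ Submodule.span ℂ (Set.range y))
    (h4 : Disjoint K2 (Submodule.span ℂ (Set.range (Sum.elim x y))))
    (h5 : Disjoint K3 (Submodule.span ℂ
      (Set.range (Sum.elim (fun i : Fin d => x i.castSucc) (fun i : Fin d => y i.castSucc)))))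
    (h6 : x (Fin.last d) ∈ K3 ∧ y (Fin.last d) ∈ K3) :
    ∃! lam : ℂ, lam ≠ 0 ∧ ∀ s t : ℂ, (s, t) ≠ (0, 0) →
      f2 s t = K2 ⊔ Submodule.span ℂ
        (Set.range (fun i : Fin (d + 1) =>
          s • x i + t • (if i = Fin.last d then lam • y i else y i))) := by
  classical
  -- notation
  set S : Submodule ℂ E := Submodule.span ℂ (Set.range (Sum.elim x y)) with hSdef
  set X : Submodule ℂ E := Submodule.span ℂ
      (Set.range (Sum.elim (fun i : Fin d => x i.castSucc) (fun i : Fin d => y i.castSucc)))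
      with hXdef
  set L : ℂ → ℂ → Submodule ℂ E := fun s t => Submodule.span ℂ
      (Set.range (fun i : Fin d => s • x i.castSucc + t • y i.castSucc)) with hLdef
  set E2 : Submodule ℂ E := Submodule.span ℂ ({x (Fin.last d), y (Fin.last d)} : Set E)
      with hE2def
  have hne10 : ((1 : ℂ), (0 : ℂ)) ≠ (0, 0) := by simp
  have hne01 : ((0 : ℂ), (1 : ℂ)) ≠ (0, 0) := by simp
  have hne11 : ((1 : ℂ), (1 : ℂ)) ≠ (0, 0) := by simp
  have hnst : ∀ {s t : ℂ}, (s, t) ≠ (0, 0) → ¬(s = 0 ∧ t = 0) := by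
    intro s t h hc; exact h (by rw [hc.1, hc.2])
  -- basic independence facts
  have hxind : LinearIndependent ℂ x := by
    have := hindep.comp Sum.inl Sum.inl_injective
    simpa using this
  have hyind : LinearIndependent ℂ y := by
    have := hindep.comp Sum.inr Sum.inr_injective
    simpa using this
  have hspanxS : Submodule.span ℂ (Set.range x) ≤ S := by
    rw [hSdef]; apply span_le.mpr; rintro _ ⟨j, rfl⟩; exact subset_span ⟨Sum.inl j, rfl⟩
  have hspanyS : Submodule.span ℂ (Set.range y) ≤ S := by
    rw [hSdef]; apply span_le.mpr; rintro _ ⟨j, rfl⟩; exact subset_span ⟨Sum.inr j, rfl⟩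
  have hXS : X ≤ S := by
    rw [hXdef, hSdef]; apply span_le.mpr; rintro _ ⟨k, rfl⟩
    cases k with
    | inl j => exact subset_span ⟨Sum.inl j.castSucc, rfl⟩
    | inr j => exact subset_span ⟨Sum.inr j.castSucc, rfl⟩
  have hLX : ∀ s t : ℂ, L s t ≤ X := by
    intro s t; rw [hLdef, hXdef]; apply span_le.mpr; rintro _ ⟨j, rfl⟩
    exact add_mem (smul_mem _ _ (subset_span ⟨Sum.inl j, rfl⟩))
      (smul_mem _ _ (subset_span ⟨Sum.inr j, rfl⟩))
  have hLS : ∀ s t : ℂ, L s t ≤ S := fun s t => (hLX s t).trans hXS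
  have hE2S : E2 ≤ S := by
    rw [hE2def]; apply span_le.mpr; rintro v hv
    rcases hv with rfl | rfl
    · exact subset_span ⟨Sum.inl (Fin.last d), rfl⟩
    · exact subset_span ⟨Sum.inr (Fin.last d), rfl⟩
  have hE2K3 : E2 ≤ K3 := by
    rw [hE2def]; apply span_le.mpr; rintro v hv
    rcases hv with rfl | rfl
    · exact h6.1
    · exact h6.2
  -- kernels sit inside the fibers
  have hK2le : ∀ s t : ℂ, (s, t) ≠ (0, 0) → K2 ≤ f2 s t := by
    intro s t h; rw [hK2]
    exact iInf_le (fun p : {p : ℂ × ℂ // p ≠ (0, 0)} => f2 p.1.1 p.1.2) ⟨(s, t), h⟩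
  have hK3le : ∀ s t : ℂ, (s, t) ≠ (0, 0) → K3 ≤ f3 s t := by
    intro s t h; rw [hK3]
    exact iInf_le (fun p : {p : ℂ × ℂ // p ≠ (0, 0)} => f3 p.1.1 p.1.2) ⟨(s, t), h⟩
  -- ranks of fibers
  obtain ⟨e, vv, hesum, he⟩ := hf2
  obtain ⟨e3, vv3, -, he3⟩ := hf3
  have hf2rank : ∀ s t : ℂ, (s, t) ≠ (0, 0) → finrank ℂ (f2 s t) = a2 := by
    intro s t h
    rw [(he s t h).2, finrank_span_eq_card (he s t h).1]
    simp
  have hf3rank : ∀ s t : ℂ, (s, t) ≠ (0, 0) → finrank ℂ (f3 s t) = a3 := by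
    intro s t h
    rw [(he3 s t h).2, finrank_span_eq_card (he3 s t h).1]
    simp
  -- rank of L
  have hLind : ∀ s t : ℂ, (s, t) ≠ (0, 0) →
      LinearIndependent ℂ (fun i : Fin d => s • x i.castSucc + t • y i.castSucc) := by
    intro s t h
    have hcomp : LinearIndependent ℂ
        (Sum.elim (fun i : Fin d => x i.castSucc) (fun i : Fin d => y i.castSucc)) := by
      have := hindep.comp (Sum.map Fin.castSucc Fin.castSucc)
        (Sum.map_injective.mpr ⟨Fin.castSucc_injective d, Fin.castSucc_injective d⟩)
      have heq : Sum.elim (fun i : Fin d => x i.castSucc) (fun i : Fin d => y i.castSucc)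
          = (Sum.elim x y) ∘ (Sum.map Fin.castSucc Fin.castSucc) := by
        funext k; cases k <;> rfl
      rw [heq]; exact this
    have := aux_indep_scaled hcomp (hnst h) (fun _ => 1) (fun _ => one_ne_zero)
    simpa using this
  have hLrank : ∀ s t : ℂ, (s, t) ≠ (0, 0) → finrank ℂ (L s t) = d := by
    intro s t h
    rw [hLdef, finrank_span_eq_card (hLind s t h)]
    simp
  -- L is in every fiber
  have hLf1 : ∀ s t : ℂ, (s, t) ≠ (0, 0) → L s t ≤ f1 s t := by
    intro s t h; rw [h1 s t h]; exact le_sup_right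
  have hLf3 : ∀ s t : ℂ, (s, t) ≠ (0, 0) → L s t ≤ f3 s t := by
    intro s t h
    exact ((hLf1 s t h).trans (hflag s t h).1).trans (hflag s t h).2
  have hda3 : d ≤ a3 := by
    have := Submodule.finrank_mono (hLf3 1 1 hne11)
    rwa [hLrank 1 1 hne11, hf3rank 1 1 hne11] at this
  -- f3 is determined
  have hf3eq : ∀ s t : ℂ, (s, t) ≠ (0, 0) → f3 s t = K3 ⊔ L s t := by
    intro s t h
    have hdisj3 : Disjoint K3 (L s t) := h5.mono_right (hLX s t)
    have hsum3 : finrank ℂ (K3 ⊔ L s t : Submodule ℂ E) = (a3 - d) + d := by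
      have hh := Submodule.finrank_sup_add_finrank_inf_eq K3 (L s t)
      rw [disjoint_iff.mp hdisj3] at hh
      simp only [finrank_bot, add_zero] at hh
      rw [hh, hdK3, hLrank s t h]
    have hle3 : K3 ⊔ L s t ≤ f3 s t := sup_le (hK3le s t h) (hLf3 s t h)
    refine (Submodule.eq_of_le_of_finrank_le hle3 ?_).symm
    rw [hsum3, hf3rank s t h]
    omega
  -- a2 ≥ d + 1
  have ha2d : d + 1 ≤ a2 := by
    have hxle : Submodule.span ℂ (Set.range x) ≤ f2 1 0 := by
      rw [h2]; exact le_sup_right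
    have := Submodule.finrank_mono hxle
    rwa [finrank_span_eq_card hxind, hf2rank 1 0 hne10, Fintype.card_fin] at this
  -- `K3 ⊓ S ≤ E2`
  have hK3S : K3 ⊓ S ≤ E2 := by
    rintro v ⟨hv3, hvS⟩
    obtain ⟨c, hc⟩ := (mem_span_range_iff_exists_fun ℂ).mp hvS
    set v2 : E := c (Sum.inl (Fin.last d)) • x (Fin.last d)
        + c (Sum.inr (Fin.last d)) • y (Fin.last d) with hv2def
    have hv2E2 : v2 ∈ E2 := by
      rw [hE2def]
      exact add_mem (smul_mem _ _ (subset_span (by simp)))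
        (smul_mem _ _ (subset_span (by simp)))
    have hsplit : v - v2 = (∑ j : Fin d, c (Sum.inl j.castSucc) • x j.castSucc)
        + ∑ j : Fin d, c (Sum.inr j.castSucc) • y j.castSucc := by
      rw [← hc, Fintype.sum_sum_type]
      simp only [Sum.elim_inl, Sum.elim_inr]
      rw [Fin.sum_univ_castSucc (f := fun i => c (Sum.inl i) • x i),
        Fin.sum_univ_castSucc (f := fun i => c (Sum.inr i) • y i), hv2def]
      abel
    have hvX : v - v2 ∈ X := by
      rw [hsplit, hXdef]
      exact add_mem
        (sum_mem fun j _ => smul_mem _ _ (subset_span ⟨Sum.inl j, rfl⟩))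
        (sum_mem fun j _ => smul_mem _ _ (subset_span ⟨Sum.inr j, rfl⟩))
    have hvK3 : v - v2 ∈ K3 := sub_mem hv3 (hE2K3 hv2E2)
    have : v - v2 = 0 := by
      have := disjoint_iff.mp h5 ▸ (Submodule.mem_inf.mpr ⟨hvK3, hvX⟩)
      simpa using this
    have hvv2 : v = v2 := by
      have := sub_eq_zero.mp this; exact this
    rw [hvv2]; exact hv2E2
  -- structure of the generators of f2 : counting degrees
  have hgen0 : ∀ (k : Fin a2), e k = 0 → ∀ s t : ℂ,
      (∑ j ∈ Finset.range (e k + 1), (s ^ j * t ^ (e k - j)) • vv k j) = vv k 0 := by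
    intro k hk s t
    rw [hk]
    simp
  have hgen1 : ∀ (k : Fin a2), e k = 1 → ∀ s t : ℂ,
      (∑ j ∈ Finset.range (e k + 1), (s ^ j * t ^ (e k - j)) • vv k j)
        = s • vv k 1 + t • vv k 0 := by
    intro k hk s t
    rw [hk]
    rw [Finset.sum_range_succ, Finset.sum_range_one]
    simp [add_comm]
  have hz : ∀ k : Fin a2, e k = 0 → vv k 0 ∈ K2 := by
    intro k hk
    rw [hK2]
    refine (Submodule.mem_iInf _).mpr ?_
    rintro ⟨⟨s, t⟩, hp⟩
    rw [(he s t hp).2]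
    exact subset_span ⟨k, hgen0 k hk s t⟩
  set Z : Finset (Fin a2) := Finset.univ.filter (fun i => e i = 0) with hZdef
  have hmemZ : ∀ k, k ∈ Z ↔ e k = 0 := by
    intro k; rw [hZdef]; simp
  have hcardZ : Z.card ≤ a2 - (d + 1) := by
    have hind0 : LinearIndependent ℂ (fun i : {k // k ∈ Z} => vv (i : Fin a2) 0) := by
      have base := (he 1 1 hne11).1.comp (Subtype.val : {k // k ∈ Z} → Fin a2)
        Subtype.val_injective
      have heqf : (fun i : {k // k ∈ Z} => vv (i : Fin a2) 0)
          = (fun i : Fin a2 => ∑ j ∈ Finset.range (e i + 1),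
              ((1 : ℂ) ^ j * (1 : ℂ) ^ (e i - j)) • vv i j) ∘ Subtype.val := by
        funext i
        exact (hgen0 _ ((hmemZ _).mp i.2) 1 1).symm
      rw [heqf]; exact base
    have hFz : LinearIndependent ℂ
        (fun i : {k // k ∈ Z} => (⟨vv (i : Fin a2) 0, hz _ ((hmemZ _).mp i.2)⟩ : K2)) :=
      LinearIndependent.of_comp K2.subtype hind0
    have hcard := hFz.fintype_card_le_finrank
    rw [Fintype.card_coe, hdK2] at hcard
    omega
  have hsumZc : ∑ i ∈ Zᶜ, e i = d + 1 := by
    have h0 : ∑ i ∈ Z, e i = 0 := Finset.sum_eq_zero (fun i hi => (hmemZ i).mp hi)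
    have := Finset.sum_add_sum_compl Z e
    rw [h0, zero_add, hesum] at this
    exact this
  have hcardZc : Zᶜ.card = d + 1 := by
    have hcup : Zᶜ.card ≤ d + 1 := by
      have h1le : ∀ i ∈ Zᶜ, 1 ≤ e i := by
        intro i hi
        have : ¬ e i = 0 := fun h0 => (Finset.mem_compl.mp hi) ((hmemZ i).mpr h0)
        omega
      have := Finset.sum_le_sum h1le
      rw [hsumZc] at this
      simpa using this
    have hcdown : Zᶜ.card = a2 - Z.card := by
      rw [Finset.card_compl, Fintype.card_fin]
    omega
  have he1 : ∀ k ∈ Zᶜ, e k = 1 := by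
    intro k hk
    by_contra hne
    have h2le : 2 ≤ e k := by
      have : ¬ e k = 0 := fun h0 => (Finset.mem_compl.mp hk) ((hmemZ k).mpr h0)
      omega
    have h1le : ∀ i ∈ Zᶜ, 1 ≤ e i := by
      intro i hi
      have : ¬ e i = 0 := fun h0 => (Finset.mem_compl.mp hi) ((hmemZ i).mpr h0)
      omega
    have := Finset.sum_le_sum (f := fun _ => 1) (g := e) (fun i hi => h1le i hi)
    have hsplit := Finset.add_sum_erase _ e hk
    have hrest : ∀ i ∈ Zᶜ.erase k, 1 ≤ e i := fun i hi =>
      h1le i (Finset.mem_of_mem_erase hi)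
    have hrest' := Finset.sum_le_sum hrest
    simp only [Finset.sum_const, smul_eq_mul, mul_one] at hrest'
    have hcerase : (Zᶜ.erase k).card = d := by
      rw [Finset.card_erase_of_mem hk, hcardZc]
      omega
    omega
  -- reindex the degree-one generators
  have hcardZc' : Fintype.card {k // k ∈ Zᶜ} = d + 1 := by
    rw [Fintype.card_coe]; exact hcardZc
  set σ : Fin (d + 1) ≃ {k // k ∈ Zᶜ} := (Fintype.equivFinOfCardEq hcardZc').symm with hσdef
  set u : Fin (d + 1) → E := fun i => vv ((σ i : Fin a2)) 1 with hudef
  set w : Fin (d + 1) → E := fun i => vv ((σ i : Fin a2)) 0 with hwdef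
  have hgval : ∀ (i : Fin (d + 1)) (s t : ℂ),
      (∑ j ∈ Finset.range (e (σ i : Fin a2) + 1),
        (s ^ j * t ^ (e (σ i : Fin a2) - j)) • vv (σ i : Fin a2) j) = s • u i + t • w i := by
    intro i s t
    exact hgen1 _ (he1 _ (σ i).2) s t
  -- the fibers of f2 in terms of u, w
  have hf2eq : ∀ s t : ℂ, (s, t) ≠ (0, 0) →
      f2 s t = K2 ⊔ Submodule.span ℂ (Set.range (fun i => s • u i + t • w i)) := by
    intro s t h
    apply le_antisymm
    · rw [(he s t h).2]
      apply span_le.mpr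
      rintro _ ⟨k, rfl⟩
      show (∑ j ∈ Finset.range (e k + 1), (s ^ j * t ^ (e k - j)) • vv k j) ∈ _
      by_cases hk : e k = 0
      · rw [hgen0 k hk s t]
        exact mem_sup_left (hz k hk)
      · have hkZc : k ∈ Zᶜ := Finset.mem_compl.mpr (fun hm => hk ((hmemZ k).mp hm))
        have hkeq : ((σ (σ.symm ⟨k, hkZc⟩) : {k // k ∈ Zᶜ}) : Fin a2) = k := by
          rw [Equiv.apply_symm_apply]
        have := hgval (σ.symm ⟨k, hkZc⟩) s t
        rw [hkeq] at this
        rw [this]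
        exact mem_sup_right (subset_span ⟨σ.symm ⟨k, hkZc⟩, rfl⟩)
    · refine sup_le (hK2le s t h) (span_le.mpr ?_)
      rintro _ ⟨i, rfl⟩
      rw [(he s t h).2]
      exact subset_span ⟨(σ i : Fin a2), hgval i s t⟩
  -- membership of u, w
  have hu : ∀ i, u i ∈ K2 ⊔ Submodule.span ℂ (Set.range x) := by
    intro i
    have hm : (1 : ℂ) • u i + (0 : ℂ) • w i ∈ f2 1 0 := by
      rw [(he 1 0 hne10).2]
      exact subset_span ⟨(σ i : Fin a2), hgval i 1 0⟩
    rw [h2] at hm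
    simpa using hm
  have hw : ∀ i, w i ∈ K2 ⊔ Submodule.span ℂ (Set.range y) := by
    intro i
    have hm : (0 : ℂ) • u i + (1 : ℂ) • w i ∈ f2 0 1 := by
      rw [(he 0 1 hne01).2]
      exact subset_span ⟨(σ i : Fin a2), hgval i 0 1⟩
    rw [h3] at hm
    simpa using hm
  choose p hpK u' hu'span hpu using fun i => Submodule.mem_sup.mp (hu i)
  choose q hqK w' hw'span hqw using fun i => Submodule.mem_sup.mp (hw i)
  -- the moving part P'
  set P : ℂ → ℂ → Submodule ℂ E := fun s t =>
    Submodule.span ℂ (Set.range (fun i => s • u' i + t • w' i)) with hPdef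
  have hPS : ∀ s t : ℂ, P s t ≤ S := by
    intro s t
    rw [hPdef]; apply span_le.mpr; rintro _ ⟨i, rfl⟩
    exact add_mem (smul_mem _ _ (hspanxS (hu'span i))) (smul_mem _ _ (hspanyS (hw'span i)))
  have hf2eq' : ∀ s t : ℂ, (s, t) ≠ (0, 0) → f2 s t = K2 ⊔ P s t := by
    intro s t h
    rw [hf2eq s t h, hPdef]
    apply aux_sup_span_congr
    intro i
    have hdiff : (s • u i + t • w i) - (s • u' i + t • w' i) = s • p i + t • q i := by
      rw [← hpu i, ← hqw i]
      simp only [smul_add]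
      abel
    rw [hdiff]
    exact add_mem (smul_mem _ _ (hpK i)) (smul_mem _ _ (hqK i))
  -- P at the special points
  have hP10 : Submodule.span ℂ (Set.range u') = Submodule.span ℂ (Set.range x) := by
    have hEq : K2 ⊔ P 1 0 = K2 ⊔ Submodule.span ℂ (Set.range x) := by
      rw [← hf2eq' 1 0 hne10, h2]
    have hfun : (fun i : Fin (d + 1) => (1 : ℂ) • u' i + (0 : ℂ) • w' i) = u' := by
      funext i; simp
    have hsimp : P 1 0 = Submodule.span ℂ (Set.range u') := by
      show Submodule.span ℂ (Set.range (fun i => (1 : ℂ) • u' i + (0 : ℂ) • w' i)) = _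
      rw [hfun]
    rw [← hsimp]
    exact aux_sup_cancel h4 (hPS 1 0) hspanxS hEq
  have hP01 : Submodule.span ℂ (Set.range w') = Submodule.span ℂ (Set.range y) := by
    have hEq : K2 ⊔ P 0 1 = K2 ⊔ Submodule.span ℂ (Set.range y) := by
      rw [← hf2eq' 0 1 hne01, h3]
    have hfun : (fun i : Fin (d + 1) => (0 : ℂ) • u' i + (1 : ℂ) • w' i) = w' := by
      funext i; simp
    have hsimp : P 0 1 = Submodule.span ℂ (Set.range w') := by
      show Submodule.span ℂ (Set.range (fun i => (0 : ℂ) • u' i + (1 : ℂ) • w' i)) = _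
      rw [hfun]
    rw [← hsimp]
    exact aux_sup_cancel h4 (hPS 0 1) hspanyS hEq
  -- L sits inside P
  have hLP : ∀ s t : ℂ, (s, t) ≠ (0, 0) → L s t ≤ P s t := by
    intro s t h
    have hf : L s t ≤ K2 ⊔ P s t := by
      rw [← hf2eq' s t h]
      exact (hLf1 s t h).trans (hflag s t h).1
    calc L s t ≤ (K2 ⊔ P s t) ⊓ S := le_inf hf (hLS s t)
      _ = P s t := aux_sup_inf_cancel h4 (hPS s t)
  -- rank of P
  have hPrank : ∀ s t : ℂ, (s, t) ≠ (0, 0) → finrank ℂ (P s t) = d + 1 := by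
    intro s t h
    have hup : finrank ℂ (P s t) ≤ d + 1 := by
      have := finrank_range_le_card (R := ℂ) (fun i => s • u' i + t • w' i)
      rw [Fintype.card_fin] at this
      rw [hPdef]
      simpa [Set.finrank] using this
    have hlow : a2 ≤ (a2 - d - 1) + finrank ℂ (P s t) := by
      have hh := Submodule.finrank_sup_add_finrank_inf_eq K2 (P s t)
      have h2' : finrank ℂ (f2 s t) = finrank ℂ (K2 ⊔ P s t : Submodule ℂ E) := by
        rw [hf2eq' s t h]
      rw [hf2rank s t h] at h2'
      rw [hdK2] at hh
      omega
    omega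
  -- P is inside E2 ⊔ L
  have hPE2L : ∀ s t : ℂ, (s, t) ≠ (0, 0) → P s t ≤ E2 ⊔ L s t := by
    intro s t h
    have hPf3 : P s t ≤ f3 s t := by
      have : P s t ≤ f2 s t := by rw [hf2eq' s t h]; exact le_sup_right
      exact this.trans (hflag s t h).2
    calc P s t ≤ (K3 ⊔ L s t) ⊓ S := le_inf (by rw [← hf3eq s t h]; exact hPf3) (hPS s t)
      _ = L s t ⊔ (K3 ⊓ S) := by rw [sup_comm K3 (L s t), sup_inf_assoc_of_le _ (hLS s t)]
      _ ≤ L s t ⊔ E2 := sup_le_sup_left hK3S _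
      _ = E2 ⊔ L s t := sup_comm _ _
  -- the coordinate functionals φ (coefficient of x_last) and ψ (coefficient of y_last)
  obtain ⟨S', hScompl⟩ := Submodule.exists_isCompl S
  set prj : E →ₗ[ℂ] S := S.linearProjOfIsCompl S' hScompl with hprjdef
  set BS : Basis (Fin (d + 1) ⊕ Fin (d + 1)) ℂ S := Basis.span hindep with hBSdef
  set φ : E →ₗ[ℂ] ℂ := (BS.coord (Sum.inl (Fin.last d))).comp prj with hφdef
  set ψ : E →ₗ[ℂ] ℂ := (BS.coord (Sum.inr (Fin.last d))).comp prj with hψdef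
  have hcoord : ∀ (k l : Fin (d + 1) ⊕ Fin (d + 1)),
      (BS.coord l).comp prj (Sum.elim x y k) = if k = l then 1 else 0 := by
    intro k l
    have hkS : Sum.elim x y k ∈ S := subset_span ⟨k, rfl⟩
    have hproj : prj (Sum.elim x y k) = ⟨Sum.elim x y k, hkS⟩ := by
      rw [hprjdef]
      exact Submodule.linearProjOfIsCompl_apply_left hScompl ⟨Sum.elim x y k, hkS⟩
    have hbs : (⟨Sum.elim x y k, hkS⟩ : S) = BS k := by
      apply Subtype.ext
      rw [hBSdef]
      exact congrArg Subtype.val (Basis.span_apply hindep k).symm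
    rw [LinearMap.comp_apply, hproj, hbs, Basis.coord_apply, BS.repr_self_apply]
  have hφx : ∀ j, φ (x j) = if j = Fin.last d then 1 else 0 := by
    intro j
    have := hcoord (Sum.inl j) (Sum.inl (Fin.last d))
    rw [hφdef]
    simpa using this
  have hφy : ∀ j, φ (y j) = 0 := by
    intro j
    have := hcoord (Sum.inr j) (Sum.inl (Fin.last d))
    rw [hφdef]
    simpa using this
  have hψx : ∀ j, ψ (x j) = 0 := by
    intro j
    have := hcoord (Sum.inl j) (Sum.inr (Fin.last d))
    rw [hψdef]
    simpa using this
  have hψy : ∀ j, ψ (y j) = if j = Fin.last d then 1 else 0 := by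
    intro j
    have := hcoord (Sum.inr j) (Sum.inr (Fin.last d))
    rw [hψdef]
    simpa using this
  have hφspany : ∀ z ∈ Submodule.span ℂ (Set.range y), φ z = 0 := by
    intro z hzm
    have hsub : Submodule.span ℂ (Set.range y) ≤ LinearMap.ker φ := by
      apply span_le.mpr; rintro _ ⟨j, rfl⟩; exact LinearMap.mem_ker.mpr (hφy j)
    exact LinearMap.mem_ker.mp (hsub hzm)
  have hψspanx : ∀ z ∈ Submodule.span ℂ (Set.range x), ψ z = 0 := by
    intro z hzm
    have hsub : Submodule.span ℂ (Set.range x) ≤ LinearMap.ker ψ := by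
      apply span_le.mpr; rintro _ ⟨j, rfl⟩; exact LinearMap.mem_ker.mpr (hψx j)
    exact LinearMap.mem_ker.mp (hsub hzm)
  have hφL : ∀ s t : ℂ, ∀ z ∈ L s t, φ z = 0 := by
    intro s t z hzm
    have hsub : L s t ≤ LinearMap.ker φ := by
      rw [hLdef]; apply span_le.mpr; rintro _ ⟨j, rfl⟩
      refine LinearMap.mem_ker.mpr ?_
      rw [map_add, map_smul, map_smul, hφx, hφy]
      simp [(Fin.castSucc_lt_last j).ne]
    exact LinearMap.mem_ker.mp (hsub hzm)
  have hψL : ∀ s t : ℂ, ∀ z ∈ L s t, ψ z = 0 := by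
    intro s t z hzm
    have hsub : L s t ≤ LinearMap.ker ψ := by
      rw [hLdef]; apply span_le.mpr; rintro _ ⟨j, rfl⟩
      refine LinearMap.mem_ker.mpr ?_
      rw [map_add, map_smul, map_smul, hψx, hψy]
      simp [(Fin.castSucc_lt_last j).ne]
    exact LinearMap.mem_ker.mp (hsub hzm)
  -- α and β; existence of nonzero coordinates
  have hψu' : ∀ i, ψ (u' i) = 0 := fun i => hψspanx _ (hu'span i)
  have hφw' : ∀ i, φ (w' i) = 0 := fun i => hφspany _ (hw'span i)
  have hαex : ∃ i, φ (u' i) ≠ 0 := by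
    by_contra hall
    push_neg at hall
    have hsub : Submodule.span ℂ (Set.range u') ≤ LinearMap.ker φ := by
      apply span_le.mpr; rintro _ ⟨i, rfl⟩; exact LinearMap.mem_ker.mpr (hall i)
    have hx_mem : x (Fin.last d) ∈ Submodule.span ℂ (Set.range u') := by
      rw [hP10]; exact subset_span ⟨Fin.last d, rfl⟩
    have := LinearMap.mem_ker.mp (hsub hx_mem)
    rw [hφx] at this
    simp at this
  have hβex : ∃ i, ψ (w' i) ≠ 0 := by
    by_contra hall
    push_neg at hall
    have hsub : Submodule.span ℂ (Set.range w') ≤ LinearMap.ker ψ := by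
      apply span_le.mpr; rintro _ ⟨i, rfl⟩; exact LinearMap.mem_ker.mpr (hall i)
    have hy_mem : y (Fin.last d) ∈ Submodule.span ℂ (Set.range w') := by
      rw [hP01]; exact subset_span ⟨Fin.last d, rfl⟩
    have := LinearMap.mem_ker.mp (hsub hy_mem)
    rw [hψy] at this
    simp at this
  -- proportionality via the point (1,1)
  obtain ⟨z, hPz⟩ := aux_exists_compl_vec (hLP 1 1 hne11)
    (by rw [hPrank 1 1 hne11, hLrank 1 1 hne11])
  have hprop : ∀ i, ∃ c : ℂ, φ (u' i) = c * φ z ∧ ψ (w' i) = c * ψ z := by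
    intro i
    have hmem : u' i + w' i ∈ P 1 1 := by
      have : (1 : ℂ) • u' i + (1 : ℂ) • w' i ∈ P 1 1 := by
        rw [hPdef]; exact subset_span ⟨i, rfl⟩
      simpa using this
    rw [hPz] at hmem
    obtain ⟨l, hl, zz, hzz, hsum'⟩ := Submodule.mem_sup.mp hmem
    obtain ⟨c, rfl⟩ := Submodule.mem_span_singleton.mp hzz
    refine ⟨c, ?_, ?_⟩
    · have := congrArg φ hsum'
      rw [map_add, map_add, map_smul, hφL 1 1 l hl, hφw' i] at this
      simpa [smul_eq_mul] using this.symm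
    · have := congrArg ψ hsum'
      rw [map_add, map_add, map_smul, hψL 1 1 l hl, hψu' i] at this
      simpa [smul_eq_mul] using this.symm
  obtain ⟨i1, hα1⟩ := hαex
  obtain ⟨i2, hβ2⟩ := hβex
  obtain ⟨c1, hc1φ, hc1ψ⟩ := hprop i1
  obtain ⟨c2, hc2φ, hc2ψ⟩ := hprop i2
  have hγ : φ z ≠ 0 := fun h0 => hα1 (by rw [hc1φ, h0, mul_zero])
  have hδ : ψ z ≠ 0 := fun h0 => hβ2 (by rw [hc2ψ, h0, mul_zero])
  set lam : ℂ := ψ z / φ z with hlamdef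
  have hlam0 : lam ≠ 0 := div_ne_zero hδ hγ
  have hβα : ∀ i, ψ (w' i) = lam * φ (u' i) := by
    intro i
    obtain ⟨c, hcφ, hcψ⟩ := hprop i
    rw [hcφ, hcψ, hlamdef]
    field_simp
  have hα1' : φ (u' i1) ≠ 0 := hα1
  -- the main formula
  have hmain : ∀ s t : ℂ, (s, t) ≠ (0, 0) →
      f2 s t = K2 ⊔ Submodule.span ℂ
        (Set.range (fun i : Fin (d + 1) =>
          s • x i + t • (if i = Fin.last d then lam • y i else y i))) := by
    intro s t h
    -- the key vector is in P s t
    have hτ : s • x (Fin.last d) + (t * lam) • y (Fin.last d) ∈ P s t := by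
      have hg : s • u' i1 + t • w' i1 ∈ P s t := by
        rw [hPdef]; exact subset_span ⟨i1, rfl⟩
      have hg2 := hPE2L s t h hg
      obtain ⟨e2, he2, l, hl, hsum'⟩ := Submodule.mem_sup.mp hg2
      obtain ⟨a, b, hab⟩ := Submodule.mem_span_pair.mp (by rw [hE2def] at he2; exact he2)
      have hφg : φ (s • u' i1 + t • w' i1) = s * φ (u' i1) := by
        rw [map_add, map_smul, map_smul, hφw' i1]
        simp [smul_eq_mul]
      have hψg : ψ (s • u' i1 + t • w' i1) = t * (lam * φ (u' i1)) := by
        rw [map_add, map_smul, map_smul, hψu' i1, hβα i1]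
        simp [smul_eq_mul]
      have hφe2 : φ e2 = a := by
        rw [← hab, map_add, map_smul, map_smul, hφx, hφy]
        simp
      have hψe2 : ψ e2 = b := by
        rw [← hab, map_add, map_smul, map_smul, hψx, hψy]
        simp
      have ha : a = s * φ (u' i1) := by
        have := congrArg φ hsum'
        rw [map_add, hφL s t l hl, hφe2, add_zero, hφg] at this
        exact this
      have hb : b = t * (lam * φ (u' i1)) := by
        have := congrArg ψ hsum'
        rw [map_add, hψL s t l hl, hψe2, add_zero, hψg] at this
        exact this
      have he2P : e2 ∈ P s t := by
        have : e2 = (s • u' i1 + t • w' i1) - l := by rw [← hsum']; abel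
        rw [this]
        exact sub_mem hg (hLP s t h hl)
      have he2eq : e2 = φ (u' i1) • (s • x (Fin.last d) + (t * lam) • y (Fin.last d)) := by
        rw [← hab, ha, hb]
        rw [smul_add, smul_smul, smul_smul]
        ring_nf
      have := he2eq ▸ he2P
      have hmem := Submodule.smul_mem (P s t) (φ (u' i1))⁻¹ this
      rwa [inv_smul_smul₀ hα1'] at hmem
    -- the target span
    have hQle : Submodule.span ℂ
        (Set.range (fun i : Fin (d + 1) =>
          s • x i + t • (if i = Fin.last d then lam • y i else y i))) ≤ P s t := by
      apply span_le.mpr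
      rintro _ ⟨i, rfl⟩
      by_cases hi : i = Fin.last d
      · subst hi
        have hgoal : (fun i : Fin (d + 1) =>
            s • x i + t • (if i = Fin.last d then lam • y i else y i)) (Fin.last d)
            = s • x (Fin.last d) + (t * lam) • y (Fin.last d) := by
          simp [smul_smul]
        rw [hgoal]
        exact hτ
      · obtain ⟨j, rfl⟩ := Fin.exists_castSucc_eq.mpr hi
        simp only [if_neg hi]
        exact hLP s t h (subset_span ⟨j, rfl⟩)
    have hQrank : finrank ℂ (Submodule.span ℂ
        (Set.range (fun i : Fin (d + 1) =>
          s • x i + t • (if i = Fin.last d then lam • y i else y i)))) = d + 1 := by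
      have hind := aux_indep_scaled hindep (hnst h)
        (fun i => if i = Fin.last d then lam else 1)
        (fun i => by by_cases hi : i = Fin.last d <;> simp [hi, hlam0])
      have heqf : (fun i : Fin (d + 1) => s • x i + (t * if i = Fin.last d then lam else 1) • y i)
          = (fun i : Fin (d + 1) =>
            s • x i + t • (if i = Fin.last d then lam • y i else y i)) := by
        funext i
        by_cases hi : i = Fin.last d <;> simp [hi, smul_smul]
      rw [heqf] at hind
      rw [finrank_span_eq_card hind, Fintype.card_fin]
    have hPQ : P s t = Submodule.span ℂ
        (Set.range (fun i : Fin (d + 1) =>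
          s • x i + t • (if i = Fin.last d then lam • y i else y i))) := by
      refine (Submodule.eq_of_le_of_finrank_le hQle ?_).symm
      rw [hQrank, hPrank s t h]
    rw [hf2eq' s t h, hPQ]
  refine ⟨lam, ⟨hlam0, hmain⟩, ?_⟩
  -- uniqueness
  intro lam' ⟨hlam'0, hmain'⟩
  have hQS : ∀ μ : ℂ, Submodule.span ℂ
      (Set.range (fun i : Fin (d + 1) =>
        (1 : ℂ) • x i + (1 : ℂ) • (if i = Fin.last d then μ • y i else y i))) ≤ S := by
    intro μ
    apply span_le.mpr
    rintro _ ⟨i, rfl⟩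
    refine add_mem (smul_mem _ _ (subset_span ⟨Sum.inl i, rfl⟩)) (smul_mem _ _ ?_)
    by_cases hi : i = Fin.last d
    · rw [if_pos hi]
      exact smul_mem _ _ (subset_span ⟨Sum.inr i, rfl⟩)
    · rw [if_neg hi]
      exact subset_span ⟨Sum.inr i, rfl⟩
  have hQQ : Submodule.span ℂ
      (Set.range (fun i : Fin (d + 1) =>
        (1 : ℂ) • x i + (1 : ℂ) • (if i = Fin.last d then lam' • y i else y i)))
      = Submodule.span ℂ
      (Set.range (fun i : Fin (d + 1) =>
        (1 : ℂ) • x i + (1 : ℂ) • (if i = Fin.last d then lam • y i else y i))) := by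
    apply aux_sup_cancel h4 (hQS lam') (hQS lam)
    rw [← hmain' 1 1 hne11, ← hmain 1 1 hne11]
  have hτ'mem : (1 : ℂ) • x (Fin.last d)
      + (1 : ℂ) • (if Fin.last d = Fin.last d then lam' • y (Fin.last d) else y (Fin.last d))
      ∈ Submodule.span ℂ
      (Set.range (fun i : Fin (d + 1) =>
        (1 : ℂ) • x i + (1 : ℂ) • (if i = Fin.last d then lam • y i else y i))) := by
    rw [← hQQ]
    exact subset_span ⟨Fin.last d, rfl⟩
  obtain ⟨c, hc⟩ := (mem_span_range_iff_exists_fun ℂ).mp hτ'mem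
  -- evaluate φ and ψ on the combination
  have hφgen : ∀ i : Fin (d + 1),
      φ ((1 : ℂ) • x i + (1 : ℂ) • (if i = Fin.last d then lam • y i else y i))
        = if i = Fin.last d then 1 else 0 := by
    intro i
    by_cases hi : i = Fin.last d <;>
      simp [hi, hφx, hφy, map_add, map_smul]
  have hψgen : ∀ i : Fin (d + 1),
      ψ ((1 : ℂ) • x i + (1 : ℂ) • (if i = Fin.last d then lam • y i else y i))
        = if i = Fin.last d then lam else 0 := by
    intro i
    by_cases hi : i = Fin.last d <;>
      simp [hi, hψx, hψy, map_add, map_smul]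
  have hφc := congrArg φ hc
  have hψc := congrArg ψ hc
  rw [map_sum] at hφc hψc
  simp only [map_smul, smul_eq_mul] at hφc hψc
  have hφsum : (∑ i, c i * φ ((1 : ℂ) • x i
      + (1 : ℂ) • (if i = Fin.last d then lam • y i else y i))) = c (Fin.last d) := by
    rw [Finset.sum_congr rfl (fun i _ => by rw [hφgen i])]
    simp [Finset.sum_ite_eq']
  have hψsum : (∑ i, c i * ψ ((1 : ℂ) • x i
      + (1 : ℂ) • (if i = Fin.last d then lam • y i else y i))) = c (Fin.last d) * lam := by
    rw [Finset.sum_congr rfl (fun i _ => by rw [hψgen i])]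
    simp [mul_ite, Finset.sum_ite_eq']
  rw [hφsum] at hφc
  rw [hψsum] at hψc
  simp [hφx, hφy] at hφc
  simp [hψx, hψy] at hψc
  rw [hφc, one_mul] at hψc
  exact hψc.symm
end
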